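/- arXiv:1906.10726 — 4 statements merged into one kernel-verified Lean document; each statement's English description precedes it below -/
import Mathlib

section
/- Let G be a directed acyclic graph with vertex set {1,…,n}, let X_1,…,X_n be nonempty finite sets, and let P be a probability distribution on ∏_i X_i. Then the following are equivalent. (1) P is compatible with G: there exist nonempty finite sets Λ_1,…,Λ_n, functions f_i : (∏_{j∈Pa(i)} X_j) × Λ_i → X_i, and probability distributions Q_i on Λ_i, such that for all x ∈ ∏_i X_i, P(x) = ∑_{λ∈∏_iΛ_i} ∏_{i=1}^n [x_i = f_i(x_{Pa(i)}, λ_i)]·Q_i(λ_i), where [·] is the indicator and x_{Pa(i)} is the restriction of x to the parents of i. (2) P is Markov for G: there exist stochastic kernels p_i assigning to each tuple of parent values a probability distribution on X_i, such that P(x) = ∏_{i=1}^n p_i(x_{Pa(i)})(x_i) for all x. -/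
open scoped Classical
open BigOperators

noncomputable section

set_option maxHeartbeats 1000000

private lemma sum_prod_pi {ι : Type} [Fintype ι] [DecidableEq ι] {κ : ι → Type} [∀ i, Fintype (κ i)]
    (g : ∀ i, κ i → ℝ) :
    (∑ lam : ∀ i, κ i, ∏ i, g i (lam i)) = ∏ i, ∑ k, g i k := by
  rw [Finset.prod_univ_sum, Fintype.piFinset_univ]

private lemma kernel_rep {ι : Type} [Fintype ι] [DecidableEq ι] {A : Type} [Fintype A]
    (p : ι → A → ℝ) (hp1 : ∀ pa, ∑ y, p pa y = 1) (x0 : ι) (xi : A) :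
    p x0 xi = ∑ g : ι → A, (if xi = g x0 then 1 else 0) * ∏ pa, p pa (g pa) := by
  have h1 : ∀ g : ι → A,
      (if xi = g x0 then (1:ℝ) else 0) * ∏ pa, p pa (g pa)
      = ∏ pa, (if x0 = pa then (if xi = g pa then 1 else 0) else 1) * p pa (g pa) := by
    intro g
    rw [Finset.prod_mul_distrib, Finset.prod_ite_eq]
    simp
  simp only [h1]
  rw [sum_prod_pi (fun pa (y : A) =>
    (if x0 = pa then (if xi = y then (1:ℝ) else 0) else 1) * p pa y)]
  have h2 : ∀ pa, (∑ y : A,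
      (if x0 = pa then (if xi = y then (1:ℝ) else 0) else 1) * p pa y)
      = if x0 = pa then p pa xi else 1 := by
    intro pa
    by_cases h : x0 = pa
    · simp [h, ite_mul]
    · simp [h, hp1 pa]
  simp only [h2]
  rw [Finset.prod_ite_eq]
  simp

/-- **Equivalence of classical compatibility and Markovianity.**
Given a DAG `G` on `{1,…,n}`, nonempty finite value sets `X i`, and a probability
distribution `P` on `∏ i, X i`, the distribution `P` is compatible with `G`
(i.e. arises from a functional model with independent local noise sources)
iff `P` is Markov for `G` (i.e. factorizes into kernels conditioned on the parents). -/
theorem classical_compatibility_iff_markov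
    (n : ℕ) (G : Fin n → Fin n → Prop)
    (hacyclic : ∀ v, ¬ Relation.TransGen G v v)
    (X : Fin n → Type) [∀ i, Fintype (X i)] [∀ i, Nonempty (X i)]
    (P : (∀ i, X i) → ℝ)
    (hP0 : ∀ x, 0 ≤ P x)
    (hP1 : ∑ x : ∀ i, X i, P x = 1) :
    -- (1) P is compatible with G
    (∃ (Λ : Fin n → ℕ), (∀ i, 0 < Λ i) ∧
      ∃ (f : ∀ i, (∀ j : {j // G j i}, X j.1) → Fin (Λ i) → X i)
        (Q : ∀ i, Fin (Λ i) → ℝ),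
        (∀ i k, 0 ≤ Q i k) ∧ (∀ i, ∑ k, Q i k = 1) ∧
        (∀ x : ∀ i, X i,
          P x = ∑ lam : ∀ i, Fin (Λ i),
            ∏ i, (if x i = f i (fun j => x j.1) (lam i) then 1 else 0) * Q i (lam i)))
    ↔
    -- (2) P is Markov for G
    (∃ p : ∀ i, (∀ j : {j // G j i}, X j.1) → X i → ℝ,
      (∀ i pa xi, 0 ≤ p i pa xi) ∧ (∀ i pa, ∑ xi, p i pa xi = 1) ∧
      (∀ x : ∀ i, X i, P x = ∏ i, p i (fun j => x j.1) (x i))) := by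
  constructor
  · rintro ⟨Λ, hΛ, f, Q, hQ0, hQ1, hP⟩
    refine ⟨fun i pa xi => ∑ k, (if xi = f i pa k then 1 else 0) * Q i k, ?_, ?_, ?_⟩
    · intro i pa xi
      refine Finset.sum_nonneg fun k _ => mul_nonneg ?_ (hQ0 i k)
      split <;> norm_num
    · intro i pa
      rw [Finset.sum_comm]
      have : ∀ k : Fin (Λ i),
          (∑ xi : X i, (if xi = f i pa k then 1 else 0) * Q i k) = Q i k := by
        intro k
        simp [ite_mul]
      simp only [this]
      exact hQ1 i
    · intro x
      rw [hP x]
      exact sum_prod_pi fun i k =>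
        (if x i = f i (fun j => x j.1) k then (1:ℝ) else 0) * Q i k
  · rintro ⟨p, hp0, hp1, hP⟩
    refine ⟨fun i => Fintype.card ((∀ j : {j // G j i}, X j.1) → X i),
      fun i => Fintype.card_pos, ?_⟩
    have e : ∀ i, Fin (Fintype.card ((∀ j : {j // G j i}, X j.1) → X i)) ≃
        ((∀ j : {j // G j i}, X j.1) → X i) :=
      fun i => (Fintype.equivFin _).symm
    refine ⟨fun i pa k => e i k pa, fun i k => ∏ pa, p i pa (e i k pa), ?_, ?_, ?_⟩
    · intro i k
      exact Finset.prod_nonneg fun pa _ => hp0 i pa _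
    · intro i
      rw [Equiv.sum_comp (e i) (fun g => ∏ pa, p i pa (g pa))]
      rw [sum_prod_pi (fun pa (y : X i) => p i pa y)]
      simp [hp1 i]
    · intro x
      rw [hP x]
      have key : ∀ i, p i (fun j => x j.1) (x i)
          = ∑ k, (if x i = e i k (fun j => x j.1) then (1:ℝ) else 0) *
              ∏ pa, p i pa (e i k pa) := by
        intro i
        rw [kernel_rep (p i) (hp1 i) (fun j => x j.1) (x i)]
        exact (Equiv.sum_comp (e i)
          (fun g => (if x i = g (fun j => x j.1) then (1:ℝ) else 0) *
            ∏ pa, p i pa (g pa))).symm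
      rw [Finset.prod_congr rfl fun i _ => key i]
      exact (sum_prod_pi fun i k =>
        (if x i = e i k (fun j => x j.1) then (1:ℝ) else 0) *
          ∏ pa, p i pa (e i k pa)).symm
end
end

section
/- Let H_{A_1},…,H_{A_n} and H_{B_1},…,H_{B_k} be finite-dimensional complex Hilbert spaces with ∏_j dim H_{A_j} = ∏_i dim H_{B_i}, let U : ⊗_j H_{A_j} → ⊗_i H_{B_i} be unitary, and let ρ^U be the CJ operator of the channel ρ ↦ UρU†, an operator on (⊗_i H_{B_i}) ⊗ (⊗_j H_{A_j}). Let S_1,…,S_k ⊆ {A_1,…,A_n} be subsets of the input systems such that for every i and every A_j ∉ S_i, the input A_j does not influence the output B_i. Then there exist, for each i = 1,…,k, a CJ operator ρ_{B_i|S_i} of a channel from ⊗_{A∈S_i} H_A to H_{B_i}, such that, with each ρ_{B_i|S_i} padded by identities on all other input and output tensor factors, the padded operators pairwise commute and ρ^U = ∏_{i=1}^k ρ_{B_i|S_i}. -/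
open scoped Classical ComplexOrder
open BigOperators Matrix

noncomputable section

namespace QCM

abbrev Idx (ι : Type) (d : ι → ℕ) : Type := ∀ i, Fin (d i)

instance setFintypeOfFintype {α : Type} [Fintype α] (S : Set α) : Fintype ↥S :=
  (Set.toFinite S).fintype

def restr {ι : Type} (d : ι → ℕ) (S : Set ι) (f : Idx ι d) :
    Idx S (fun i => d i.1) := fun i => f i.1

def FactorsAs {ι : Type} (d : ι → ℕ) (S : Set ι)
    (M : Matrix (Idx ι d) (Idx ι d) ℂ)
    (N : Matrix (Idx S (fun i => d i.1)) (Idx S (fun i => d i.1)) ℂ) : Prop :=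
  ∀ f g : Idx ι d,
    M f g = if ∀ i, i ∉ S → f i = g i then N (restr d S f) (restr d S g) else 0

def ActsOn {ι : Type} (d : ι → ℕ) (S : Set ι)
    (M : Matrix (Idx ι d) (Idx ι d) ℂ) : Prop :=
  ∃ N, FactorsAs d S M N

def merge {ι : Type} (d : ι → ℕ) (K : Set ι)
    (x : Idx K (fun i => d i.1)) (y : Idx (Kᶜ : Set ι) (fun i => d i.1)) : Idx ι d :=
  fun i => if h : i ∈ K then x ⟨i, h⟩ else y ⟨i, h⟩

def marg {ι : Type} [Fintype ι] (d : ι → ℕ) (K : Set ι)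
    (M : Matrix (Idx ι d) (Idx ι d) ℂ) :
    Matrix (Idx K (fun i => d i.1)) (Idx K (fun i => d i.1)) ℂ :=
  fun f g => ∑ t : Idx (Kᶜ : Set ι) (fun i => d i.1), M (merge d K f t) (merge d K g t)

def sumIdx {ι κ : Type} {d : ι → ℕ} {e : κ → ℕ} (x : Idx ι d) (y : Idx κ e) :
    Idx (ι ⊕ κ) (Sum.elim d e) := fun j =>
  match j with
  | Sum.inl i => x i
  | Sum.inr i => y i

def IsUnitaryMat {ιo ιi : Type} [Fintype ιo] [Fintype ιi] (dO : ιo → ℕ) (dI : ιi → ℕ)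
    (U : Matrix (Idx ιo dO) (Idx ιi dI) ℂ) : Prop :=
  Uᴴ * U = 1 ∧ U * Uᴴ = 1

def cjOp {ιo ιi : Type} (dO : ιo → ℕ) (dI : ιi → ℕ)
    (U : Matrix (Idx ιo dO) (Idx ιi dI) ℂ) :
    Matrix (Idx (ιo ⊕ ιi) (Sum.elim dO dI)) (Idx (ιo ⊕ ιi) (Sum.elim dO dI)) ℂ :=
  fun f g =>
    U (fun i => f (Sum.inl i)) (fun i => f (Sum.inr i)) *
      star (U (fun i => g (Sum.inl i)) (fun i => g (Sum.inr i)))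

/-- The partial trace of the CJ operator over the outputs outside `B` is `N ⊗ 1` on the factor
of input `x`, where `N` is the CJ operator of a channel. -/
def NoInfl {ιo ιi : Type} [Fintype ιo] [Fintype ιi] (dO : ιo → ℕ) (dI : ιi → ℕ)
    (U : Matrix (Idx ιo dO) (Idx ιi dI) ℂ) (x : ιi) (B : Set ιo) : Prop :=
  -- the kept factors: the outputs in `B` together with all inputs
  let K : Set (ιo ⊕ ιi) := {l | Sum.elim (fun b => b ∈ B) (fun _ => True) l}
  let dK : ↥K → ℕ := fun l => Sum.elim dO dI l.1
  -- the factors other than the one of input `x`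
  let S : Set ↥K := {l | l.1 ≠ Sum.inr x}
  ∃ N : Matrix (Idx ↥S (fun l => dK l.1)) (Idx ↥S (fun l => dK l.1)) ℂ,
    FactorsAs dK S (marg (Sum.elim dO dI) K (cjOp dO dI U)) N ∧
    N.PosSemidef ∧
    marg (fun l : ↥S => dK l.1) {l : ↥S | ∃ i : ιi, l.1.1 = Sum.inr i} N = 1

/-!
Write `ρ_T` for the CJ operator of the channel `ρ ↦ Tr_{outputs ∉ T} (U ρ U†)`, padded by the
identity on the outputs outside `T` (`cjMarg U T`). It is positive, and tracing out the outputs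
in `T` leaves the identity. Contracting the intermediate input index with `U U† = 1` gives
`ρ_S ρ_T = ρ_{S ∪ T}` for disjoint `S` and `T`; since `ρ_∅ = 1` and `ρ_univ = ρ^U`, the
operators `ρ_{i}` commute and multiply to `ρ^U`. An input outside `S i` does not influence `B i`
exactly when the marginal underlying `ρ_{i}` acts trivially on that input, and acting on a set
of factors is stable under intersections, so `ρ_{i}` acts only on `B i` and `S i`.
-/

section Locality

variable {ι : Type} {d : ι → ℕ}

@[simp] lemma restr_apply (S : Set ι) (f : Idx ι d) (i : S) : restr d S f i = f i.1 := rfl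

lemma merge_of_mem {K : Set ι} (x : Idx K (fun i => d i.1))
    (y : Idx (Kᶜ : Set ι) (fun i => d i.1)) {i : ι} (h : i ∈ K) :
    merge d K x y i = x ⟨i, h⟩ := dif_pos h

lemma merge_of_notMem {K : Set ι} (x : Idx K (fun i => d i.1))
    (y : Idx (Kᶜ : Set ι) (fun i => d i.1)) {i : ι} (h : i ∉ K) :
    merge d K x y i = y ⟨i, h⟩ := dif_neg h

@[simp] lemma restr_merge (K : Set ι) (x : Idx K (fun i => d i.1))
    (y : Idx (Kᶜ : Set ι) (fun i => d i.1)) : restr d K (merge d K x y) = x :=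
  funext fun l => merge_of_mem x y l.2

@[simp] lemma restr_compl_merge (K : Set ι) (x : Idx K (fun i => d i.1))
    (y : Idx (Kᶜ : Set ι) (fun i => d i.1)) : restr d Kᶜ (merge d K x y) = y :=
  funext fun l => merge_of_notMem x y l.2

@[simp] lemma merge_restr (K : Set ι) (f : Idx ι d) :
    merge d K (restr d K f) (restr d Kᶜ f) = f := by
  funext i
  by_cases h : i ∈ K
  · exact merge_of_mem _ _ h
  · exact merge_of_notMem _ _ h

lemma forall_notMem_piecewise_eq_iff {S T : Set ι} (o o' : Idx ι d) :
    (∀ i, i ∉ T → S.piecewise o' o i = o' i) ↔ ∀ i, i ∉ S ∪ T → o i = o' i := by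
  refine forall_congr' fun i => ?_
  by_cases hi : i ∈ S <;> simp [hi]

def pad (d : ι → ℕ) (S : Set ι)
    (N : Matrix (Idx S (fun i => d i.1)) (Idx S (fun i => d i.1)) ℂ) :
    Matrix (Idx ι d) (Idx ι d) ℂ :=
  fun f g => if ∀ i, i ∉ S → f i = g i then N (restr d S f) (restr d S g) else 0

lemma actsOn_iff {S : Set ι} {M : Matrix (Idx ι d) (Idx ι d) ℂ} :
    ActsOn d S M ↔ ∀ f g f' g' : Idx ι d, (∀ i ∈ S, f i = f' i) → (∀ i ∈ S, g i = g' i) →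
      (∀ i, i ∉ S → f' i = g' i) → M f g = if ∀ i, i ∉ S → f i = g i then M f' g' else 0 := by
  constructor
  · rintro ⟨N, hN⟩ f g f' g' hf hg hfg'
    have hrf : restr d S f = restr d S f' := funext fun i => hf i.1 i.2
    have hrg : restr d S g = restr d S g' := funext fun i => hg i.1 i.2
    rw [hN f g, hN f' g', if_pos hfg', hrf, hrg]
  · intro H
    cases isEmpty_or_nonempty (Idx ι d) with
    | inl _ => exact ⟨0, fun f => isEmptyElim f⟩
    | inr hne =>
      obtain ⟨f₀⟩ := hne
      let ext : Idx S (fun i => d i.1) → Idx ι d := fun x => merge d S x (restr d Sᶜ f₀)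
      refine ⟨fun x y => M (ext x) (ext y), fun f g => H f g _ _ ?_ ?_ ?_⟩
      · intro i hi; exact (merge_of_mem (restr d S f) _ hi).symm
      · intro i hi; exact (merge_of_mem (restr d S g) _ hi).symm
      · intro i hi; simp only [ext, merge_of_notMem _ _ hi]

variable {M : Matrix (Idx ι d) (Idx ι d) ℂ}

lemma actsOn_univ : ActsOn d Set.univ M := by
  refine actsOn_iff.2 fun f g f' g' hf hg _ => ?_
  obtain rfl : f = f' := funext fun i => hf i trivial
  obtain rfl : g = g' := funext fun i => hg i trivial
  exact (if_pos fun i hi => (hi (Set.mem_univ i)).elim).symm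

lemma ActsOn.inter {S₁ S₂ : Set ι} (h₁ : ActsOn d S₁ M) (h₂ : ActsOn d S₂ M) :
    ActsOn d (S₁ ∩ S₂) M := by
  rw [actsOn_iff] at h₁ h₂ ⊢
  intro f g f' g' hf hg hfg'
  -- pass through the pair that agrees with `(f, g)` on `S₁` and with `(f', g')` off `S₁`
  let f'' : Idx ι d := fun i => if i ∈ S₁ then f i else f' i
  let g'' : Idx ι d := fun i => if i ∈ S₁ then g i else g' i
  have e₁ := h₁ f g f'' g'' (fun i hi => by simp [f'', hi]) (fun i hi => by simp [g'', hi])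
    (fun i hi => by simpa [f'', g'', hi] using hfg' i fun h => hi h.1)
  have e₂ := h₂ f'' g'' f' g'
    (fun i hi => by by_cases h : i ∈ S₁ <;> simp [f'', h, hf i ⟨_, hi⟩])
    (fun i hi => by by_cases h : i ∈ S₁ <;> simp [g'', h, hg i ⟨_, hi⟩])
    (fun i hi => hfg' i fun h => hi h.2)
  rw [e₁, e₂]
  by_cases h : ∀ i, i ∉ S₁ ∩ S₂ → f i = g i
  · rw [if_pos h, if_pos fun i hi => h i fun h' => hi h'.1, if_pos]
    intro i hi
    by_cases h1 : i ∈ S₁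
    · simpa [f'', g'', h1] using h i fun h' => hi h'.2
    · simpa [f'', g'', h1] using hfg' i fun h' => h1 h'.1
  · rw [if_neg h]
    push Not at h
    obtain ⟨i, hi, hne⟩ := h
    by_cases h1 : i ∈ S₁
    · have hS₂ : ¬ ∀ i, i ∉ S₂ → f'' i = g'' i :=
        fun h' => hne (by simpa [f'', g'', h1] using h' i fun h2 => hi ⟨h1, h2⟩)
      rw [if_neg hS₂, ite_self]
    · rw [if_neg fun h' => hne (h' i h1)]

lemma actsOn_biInter {σ : Type} (s : Finset σ) (S : σ → Set ι)
    (h : ∀ x ∈ s, ActsOn d (S x) M) : ActsOn d (⋂ x ∈ s, S x) M := by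
  classical
  induction s using Finset.induction_on with
  | empty => simpa using actsOn_univ
  | insert a s _ ih =>
    rw [Finset.set_biInter_insert]
    exact (h a (s.mem_insert_self a)).inter (ih fun x hx => h x (Finset.mem_insert_of_mem hx))

lemma ActsOn.pad {K : Set ι} {S : Set K}
    {N : Matrix (Idx K (fun i => d i.1)) (Idx K (fun i => d i.1)) ℂ}
    (h : ActsOn (fun i : K => d i.1) S N) : ActsOn d (Subtype.val '' S) (pad d K N) := by
  rw [actsOn_iff] at h ⊢
  intro f g f' g' hf hg hfg'
  have hK : ∀ i, i ∉ K → f' i = g' i := fun i hi => hfg' i fun ⟨l, _, hl⟩ => hi (hl ▸ l.2)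
  have hS : ∀ l : K, l ∉ S → l.1 ∉ Subtype.val '' S :=
    fun l hl ⟨l', hl', e⟩ => hl (Subtype.ext e ▸ hl')
  simp only [QCM.pad]
  rw [if_pos hK, h (restr d K f) (restr d K g) (restr d K f') (restr d K g')
    (fun l hl => hf l ⟨l, hl, rfl⟩) (fun l hl => hg l ⟨l, hl, rfl⟩)
    (fun l hl => hfg' l (hS l hl)), ← ite_and]
  refine if_congr ⟨fun ⟨hK', hS'⟩ i hi => ?_, fun hfg => ⟨fun i hi => hfg i
    fun ⟨l, _, hl⟩ => hi (hl ▸ l.2), fun l hl => hfg l (hS l hl)⟩⟩ rfl rfl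
  by_cases hiK : i ∈ K
  · exact hS' ⟨i, hiK⟩ fun h => hi ⟨_, h, rfl⟩
  · exact hK' i hiK

end Locality

section Marginal

variable {ι : Type} [Fintype ι] {d : ι → ℕ}

lemma sum_merge [DecidableEq ι] (K : Set ι) (x : Idx K (fun i => d i.1)) (F : Idx ι d → ℂ) :
    ∑ t : Idx (Kᶜ : Set ι) (fun i => d i.1), F (merge d K x t)
      = ∑ h, if ∀ i (hi : i ∈ K), h i = x ⟨i, hi⟩ then F h else 0 := by
  let e : Idx K (fun i => d i.1) × Idx (Kᶜ : Set ι) (fun i => d i.1) ≃ Idx ι d :=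
    ⟨fun p => merge d K p.1 p.2, fun f => (restr d K f, restr d Kᶜ f),
      fun p => by simp, fun f => by simp⟩
  have hcond : ∀ y t, (∀ i (hi : i ∈ K), merge d K y t i = x ⟨i, hi⟩) ↔ y = x :=
    fun y t => ⟨fun h => funext fun i => (merge_of_mem y t i.2).symm.trans (h i.1 i.2),
      fun h i hi => h ▸ merge_of_mem y t hi⟩
  rw [← e.sum_comp, Fintype.sum_prod_type]
  simp only [e, Equiv.coe_fn_mk, hcond, Finset.sum_ite_irrel, Finset.sum_const_zero,
    Finset.sum_ite_eq', Finset.mem_univ, if_true]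

-- `marg` sums with the classical instance on `Kᶜ`; this restates it with the ambient one.
lemma marg_apply [DecidableEq ι] (K : Set ι) (M : Matrix (Idx ι d) (Idx ι d) ℂ)
    (x y : Idx K (fun i => d i.1)) :
    marg d K M x y =
      ∑ t : Idx (Kᶜ : Set ι) (fun i => d i.1), M (merge d K x t) (merge d K y t) := by
  unfold marg
  congr 1
  exact congrArg (@Finset.univ _) (Subsingleton.elim _ _)

lemma pad_marg_apply [DecidableEq ι] (K : Set ι) (M : Matrix (Idx ι d) (Idx ι d) ℂ)
    (f g : Idx ι d) :
    pad d K (marg d K M) f g = if ∀ i, i ∉ K → f i = g i then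
      ∑ h, if ∀ i ∈ K, h i = f i then M h (K.piecewise g h) else 0 else 0 := by
  have hpw : ∀ t, K.piecewise g (merge d K (restr d K f) t) = merge d K (restr d K g) t := by
    intro t; funext i
    by_cases hi : i ∈ K
    · simp [hi, merge_of_mem _ _ hi]
    · simp [hi, merge_of_notMem _ _ hi]
  simp only [pad, marg_apply, ← hpw]
  rw [sum_merge K (restr d K f) fun h => M h (K.piecewise g h)]
  split_ifs <;> rfl

open scoped Kronecker in
lemma posSemidef_pad {S : Set ι}
    {N : Matrix (Idx S (fun i => d i.1)) (Idx S (fun i => d i.1)) ℂ} (hN : N.PosSemidef) :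
    (pad d S N).PosSemidef := by
  have h : pad d S N = (N ⊗ₖ (1 : Matrix (Idx (Sᶜ : Set ι) (fun i => d i.1)) _ ℂ)).submatrix
      (fun f => (restr d S f, restr d Sᶜ f)) (fun f => (restr d S f, restr d Sᶜ f)) := by
    ext f g
    have hc : restr d Sᶜ f = restr d Sᶜ g ↔ ∀ i, i ∉ S → f i = g i :=
      ⟨fun h i hi => congrFun h ⟨i, hi⟩, fun h => funext fun i => h i.1 i.2⟩
    simp only [pad, submatrix_apply, kroneckerMap_apply, one_apply, mul_ite, mul_one, mul_zero,
      hc]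
    split_ifs <;> rfl
  rw [h]
  exact (hN.kronecker PosSemidef.one).submatrix _

lemma posSemidef_marg (K : Set ι) {M : Matrix (Idx ι d) (Idx ι d) ℂ}
    (hM : M.PosSemidef) : (marg d K M).PosSemidef := by
  classical
  have h : marg d K M = ∑ t, M.submatrix (merge d K · t) (merge d K · t) := by
    ext f g
    simp only [marg_apply, Matrix.sum_apply, submatrix_apply]
  rw [h]
  exact posSemidef_sum _ fun t _ => hM.submatrix _

end Marginal

section Indices

variable {ιo ιi : Type} {dO : ιo → ℕ} {dI : ιi → ℕ}

@[simp] lemma sumIdx_inl (o : Idx ιo dO) (a : Idx ιi dI) (l : ιo) : sumIdx o a (.inl l) = o l :=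
  rfl

@[simp] lemma sumIdx_inr (o : Idx ιo dO) (a : Idx ιi dI) (j : ιi) : sumIdx o a (.inr j) = a j :=
  rfl

lemma sumIdx_inj {o o' : Idx ιo dO} {a a' : Idx ιi dI} :
    sumIdx o a = sumIdx o' a' ↔ o = o' ∧ a = a' :=
  ⟨fun h => ⟨funext fun l => congrFun h (.inl l), funext fun j => congrFun h (.inr j)⟩,
    by rintro ⟨rfl, rfl⟩; rfl⟩

lemma exists_sumIdx (f : Idx (ιo ⊕ ιi) (Sum.elim dO dI)) : ∃ o a, sumIdx o a = f :=
  ⟨_, _, funext (by rintro (i | i) <;> rfl)⟩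

def outputsWithInputs (T : Set ιo) : Set (ιo ⊕ ιi) :=
  {l | Sum.elim (fun b => b ∈ T) (fun _ => True) l}

lemma inr_mem_outputsWithInputs {T : Set ιo} (j : ιi) :
    (.inr j : ιo ⊕ ιi) ∈ outputsWithInputs T :=
  trivial

def inputsOf {T : Set ιo}
    (u : Idx (outputsWithInputs T : Set (ιo ⊕ ιi)) (fun i => Sum.elim dO dI i.1)) : Idx ιi dI :=
  fun j => u ⟨.inr j, inr_mem_outputsWithInputs j⟩

end Indices

section UnitaryChannel

variable {ιo ιi : Type} [Fintype ιo] [Fintype ιi] {dO : ιo → ℕ} {dI : ιi → ℕ}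
  {U : Matrix (Idx ιo dO) (Idx ιi dI) ℂ}

def cjMarg (U : Matrix (Idx ιo dO) (Idx ιi dI) ℂ) (T : Set ιo) :
    Matrix (Idx (ιo ⊕ ιi) (Sum.elim dO dI)) (Idx (ιo ⊕ ιi) (Sum.elim dO dI)) ℂ :=
  pad (Sum.elim dO dI) (outputsWithInputs T)
    (marg (Sum.elim dO dI) (outputsWithInputs T) (cjOp dO dI U))

lemma posSemidef_cjOp (U : Matrix (Idx ιo dO) (Idx ιi dI) ℂ) :
    (cjOp dO dI U).PosSemidef :=
  posSemidef_vecMulVec_self_star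
    fun f : Idx (ιo ⊕ ιi) (Sum.elim dO dI) => U (fun i => f (Sum.inl i)) (fun i => f (Sum.inr i))

lemma posSemidef_cjMarg (U : Matrix (Idx ιo dO) (Idx ιi dI) ℂ)
    (T : Set ιo) : (cjMarg U T).PosSemidef :=
  posSemidef_pad (posSemidef_marg _ (posSemidef_cjOp U))

lemma actsOn_cjMarg {T : Set ιo} {S : Set ιi} (hni : ∀ j, j ∉ S → NoInfl dO dI U j T) :
    ActsOn (Sum.elim dO dI) {l | Sum.elim (· ∈ T) (· ∈ S) l} (cjMarg U T) := by
  have h : ∀ j ∈ Finset.univ.filter (· ∉ S),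
      ActsOn (fun l : outputsWithInputs T => Sum.elim dO dI l.1) {l | l.1 ≠ .inr j}
        (marg (Sum.elim dO dI) (outputsWithInputs T) (cjOp dO dI U)) := by
    intro j hj
    obtain ⟨N, hN, -, -⟩ := hni j (Finset.mem_filter.1 hj).2
    exact ⟨N, hN⟩
  suffices hset : {l | Sum.elim (· ∈ T) (· ∈ S) l} =
      Subtype.val '' ⋂ j ∈ Finset.univ.filter (· ∉ S), {l : outputsWithInputs T | l.1 ≠ .inr j} by
    rw [hset]
    exact (actsOn_biInter _ _ h).pad
  ext (o | j) <;> simp only [Set.mem_image, Set.mem_iInter, Finset.mem_filter, Finset.mem_univ,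
    true_and, Subtype.exists, exists_and_right, exists_eq_right, outputsWithInputs, Set.mem_ofPred]
  · exact ⟨fun ho => ⟨ho, fun i _ => Sum.inl_ne_inr⟩, fun ⟨ho, _⟩ => ho⟩
  · exact ⟨fun hj => ⟨trivial, fun i hi h => hi (Sum.inr_injective h ▸ hj)⟩,
      fun ⟨_, h⟩ => by_contra fun hj => h j hj rfl⟩

variable [DecidableEq ιo] [DecidableEq ιi]

lemma sum_sumIdx (F : Idx (ιo ⊕ ιi) (Sum.elim dO dI) → ℂ) :
    ∑ f, F f = ∑ o, ∑ a, F (sumIdx o a) := by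
  rw [← (Equiv.sumPiEquivProdPi _).symm.sum_comp, Fintype.sum_prod_type]
  refine Finset.sum_congr rfl fun o _ => Finset.sum_congr rfl fun a _ => congrArg F ?_
  funext i; cases i <;> rfl

lemma cjMarg_sumIdx (U : Matrix (Idx ιo dO) (Idx ιi dI) ℂ) (T : Set ιo) (o o' : Idx ιo dO)
    (a a' : Idx ιi dI) :
    cjMarg U T (sumIdx o a) (sumIdx o' a') = if ∀ l, l ∉ T → o l = o' l then
      ∑ c, (if ∀ l ∈ T, c l = o l then U c a * star (U (T.piecewise o' c) a') else 0) else 0 := by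
  have hout : (∀ i, i ∉ outputsWithInputs T → sumIdx o a i = sumIdx o' a' i) ↔
      ∀ l, l ∉ T → o l = o' l :=
    ⟨fun h l hl => h (.inl l) hl, by rintro h (l | j) hl; exacts [h l hl, absurd trivial hl]⟩
  have hin : ∀ c b, (∀ i ∈ outputsWithInputs T, sumIdx c b i = sumIdx o a i) ↔
      b = a ∧ ∀ l ∈ T, c l = o l :=
    fun c b => ⟨fun h => ⟨funext fun j => h (.inr j) trivial, fun l hl => h (.inl l) hl⟩,
      by rintro ⟨rfl, h⟩ (l | j) hl; exacts [h l hl, rfl]⟩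
  have hpw : ∀ c, cjOp dO dI U (sumIdx c a)
      ((outputsWithInputs T).piecewise (sumIdx o' a') (sumIdx c a)) =
        U c a * star (U (T.piecewise o' c) a') := by
    intro c
    have h : (fun l => (outputsWithInputs T).piecewise (sumIdx o' a') (sumIdx c a) (.inl l)) =
        T.piecewise o' c := by
      funext l; by_cases hl : l ∈ T <;> simp [Set.piecewise, outputsWithInputs, hl]
    have h' : (fun j => (outputsWithInputs T).piecewise (sumIdx o' a') (sumIdx c a) (.inr j)) =
        a' := by
      funext j; simp [Set.piecewise, outputsWithInputs]
    simp only [cjOp, h, h']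
    rfl
  rw [cjMarg, pad_marg_apply]
  simp only [sum_sumIdx, hout, hin, ite_and, Finset.sum_ite_eq', Finset.mem_univ, if_true, hpw]

lemma cjMarg_apply (U : Matrix (Idx ιo dO) (Idx ιi dI) ℂ) (T : Set ιo)
    (f g : Idx (ιo ⊕ ιi) (Sum.elim dO dI)) :
    cjMarg U T f g = if ∀ l, l ∉ T → f (.inl l) = g (.inl l) then
      ∑ c, (if ∀ l ∈ T, c l = f (.inl l) then U c (fun j => f (.inr j)) *
        star (U (T.piecewise (fun l => g (.inl l)) c) (fun j => g (.inr j))) else 0) else 0 := by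
  obtain ⟨o, a, rfl⟩ := exists_sumIdx f
  obtain ⟨o', a', rfl⟩ := exists_sumIdx g
  exact cjMarg_sumIdx U T o o' a a'

omit [DecidableEq ιi] in
lemma IsUnitaryMat.sum_mul_star (hU : IsUnitaryMat dO dI U) (a a' : Idx ιi dI) :
    ∑ c, U c a * star (U c a') = if a = a' then 1 else 0 := by
  have h := congrFun₂ hU.1 a' a
  simp only [mul_apply, conjTranspose_apply, one_apply, eq_comm (a := a')] at h
  rw [← h]
  congr 1
  · exact congrArg (@Finset.univ _) (Subsingleton.elim _ _)
  · exact funext fun c => mul_comm _ _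

omit [DecidableEq ιo] in
lemma IsUnitaryMat.sum_star_mul (hU : IsUnitaryMat dO dI U) (c c' : Idx ιo dO) :
    ∑ b, star (U c b) * U c' b = if c = c' then 1 else 0 := by
  have h := congrFun₂ hU.2 c' c
  simp only [mul_apply, conjTranspose_apply, one_apply, eq_comm (a := c')] at h
  rw [← h]
  congr 1
  · exact congrArg (@Finset.univ _) (Subsingleton.elim _ _)
  · exact funext fun b => mul_comm _ _

lemma IsUnitaryMat.sum_contract (hU : IsUnitaryMat dO dI U) (F G : Idx ιo dO → ℂ)
    (φ : Idx ιo dO → Idx ιo dO) :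
    ∑ b, (∑ c, F c * star (U (φ c) b)) * (∑ e, U e b * G e) = ∑ c, F c * G (φ c) := by
  calc ∑ b, (∑ c, F c * star (U (φ c) b)) * (∑ e, U e b * G e)
      = ∑ c, ∑ e, ∑ b, F c * G e * (star (U (φ c) b) * U e b) := by
        simp only [Finset.sum_mul_sum]
        refine Finset.sum_comm.trans (Finset.sum_congr rfl fun c _ => Finset.sum_comm.trans
          (Finset.sum_congr rfl fun e _ => Finset.sum_congr rfl fun b _ => by ring))
    _ = ∑ c, F c * G (φ c) := by
        simp only [← Finset.mul_sum, hU.sum_star_mul, mul_ite, mul_one, mul_zero,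
          Finset.sum_ite_eq, Finset.mem_univ, if_true]

lemma cjMarg_univ (U : Matrix (Idx ιo dO) (Idx ιi dI) ℂ) : cjMarg U Set.univ = cjOp dO dI U := by
  ext f g
  obtain ⟨o, a, rfl⟩ := exists_sumIdx f
  obtain ⟨o', a', rfl⟩ := exists_sumIdx g
  have hc : ∀ c : Idx ιo dO, (∀ l ∈ Set.univ, c l = o l) ↔ c = o :=
    fun c => ⟨fun h => funext fun l => h l trivial, fun h l _ => h ▸ rfl⟩
  rw [cjMarg_sumIdx, if_pos fun l hl => (hl trivial).elim]
  simp only [hc, Finset.sum_ite_eq', Finset.mem_univ, if_true, Set.piecewise_univ]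
  rfl

lemma cjMarg_empty (hU : IsUnitaryMat dO dI U) : cjMarg U ∅ = 1 := by
  ext f g
  obtain ⟨o, a, rfl⟩ := exists_sumIdx f
  obtain ⟨o', a', rfl⟩ := exists_sumIdx g
  rw [cjMarg_sumIdx, one_apply]
  simp only [sumIdx_inj, Set.piecewise_empty, Set.mem_empty_iff_false, IsEmpty.forall_iff,
    implies_true, not_false_eq_true, forall_const, if_true, hU.sum_mul_star, ite_and,
    ← funext_iff]

lemma cjMarg_mul_cjMarg_apply_eq_zero {S T : Set ιo} (hST : Disjoint S T) {o o' p : Idx ιo dO}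
    (hp : p ≠ S.piecewise o' o) (a a' b : Idx ιi dI) :
    cjMarg U S (sumIdx o a) (sumIdx p b) * cjMarg U T (sumIdx p b) (sumIdx o' a') = 0 := by
  obtain ⟨l, hl⟩ := Function.ne_iff.mp hp
  rw [cjMarg_sumIdx, cjMarg_sumIdx]
  by_cases hlS : l ∈ S
  · have hlT : l ∉ T := Set.disjoint_left.mp hST hlS
    rw [if_neg (c := ∀ l, l ∉ T → p l = o' l) fun h => hl (by simp [hlS, h l hlT]), mul_zero]
  · rw [if_neg (c := ∀ l, l ∉ S → o l = p l) fun h => hl (by simp [hlS, h l hlS]), zero_mul]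

lemma cjMarg_mul_of_disjoint (hU : IsUnitaryMat dO dI U) {S T : Set ιo} (hST : Disjoint S T) :
    cjMarg U S * cjMarg U T = cjMarg U (S ∪ T) := by
  ext f g
  obtain ⟨o, a, rfl⟩ := exists_sumIdx f
  obtain ⟨o', a', rfl⟩ := exists_sumIdx g
  -- the intermediate output is forced: `o` off `S` (left factor), `o'` on `S ⊆ Tᶜ` (right factor)
  let p := S.piecewise o' o
  rw [mul_apply, sum_sumIdx, Finset.sum_eq_single p
    (fun q _ hq => Finset.sum_eq_zero fun b _ => cjMarg_mul_cjMarg_apply_eq_zero hST hq a a' b)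
    (fun h => (h (Finset.mem_univ _)).elim)]
  have hpS : ∀ l, l ∉ S → o l = p l := fun l hl => by simp [p, hl]
  have hpT : (∀ l, l ∉ T → p l = o' l) ↔ ∀ l, l ∉ S ∪ T → o l = o' l :=
    forall_notMem_piecewise_eq_iff o o'
  have hc : ∀ c : Idx ιo dO, (∀ l ∈ S ∪ T, c l = o l) ↔
      (∀ l ∈ S, c l = o l) ∧ ∀ l ∈ T, S.piecewise p c l = p l := by
    intro c
    simp only [Set.mem_union, or_imp, forall_and]
    refine and_congr_right' (forall₂_congr fun l hl => ?_)
    have hlS : l ∉ S := fun h' => Set.disjoint_left.mp hST h' hl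
    simp [p, hlS]
  simp only [cjMarg_sumIdx, if_pos hpS, hpT]
  split_ifs
  · calc _ = ∑ b, (∑ c, (if ∀ l ∈ S, c l = o l then U c a else 0) *
            star (U (S.piecewise p c) b)) *
          ∑ e, U e b * (if ∀ l ∈ T, e l = p l then star (U (T.piecewise o' e) a') else 0) := by
          refine Finset.sum_congr rfl fun b _ => ?_
          congr 1 <;> refine Finset.sum_congr rfl fun c _ => ?_ <;> split_ifs <;> simp
      _ = _ := by
          rw [hU.sum_contract]
          refine Finset.sum_congr rfl fun c _ => ?_
          simp only [hc c, ite_and]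
          split_ifs
          · congr 3
            funext l
            by_cases hlT : l ∈ T
            · simp [Set.piecewise, hlT]
            · by_cases hlS : l ∈ S <;> simp [Set.piecewise, p, hlS, hlT]
          all_goals simp
  · simp

lemma commute_cjMarg_of_disjoint (hU : IsUnitaryMat dO dI U) {S T : Set ιo} (hST : Disjoint S T) :
    Commute (cjMarg U S) (cjMarg U T) := by
  rw [Commute, SemiconjBy, cjMarg_mul_of_disjoint hU hST, cjMarg_mul_of_disjoint hU hST.symm,
    Set.union_comm]

lemma commute_cjMarg_singleton (hU : IsUnitaryMat dO dI U) (i i' : ιo) :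
    Commute (cjMarg U {i}) (cjMarg U {i'}) := by
  obtain rfl | h := eq_or_ne i i'
  · exact Commute.refl _
  · exact commute_cjMarg_of_disjoint hU (Set.disjoint_singleton.2 h)

lemma noncommProd_cjMarg_singleton (hU : IsUnitaryMat dO dI U) (s : Finset ιo) :
    s.noncommProd (fun i => cjMarg U {i}) (fun i _ i' _ _ => commute_cjMarg_singleton hU i i') =
      cjMarg U s := by
  induction s using Finset.induction_on with
  | empty => erw [Finset.noncommProd_empty, Finset.coe_empty, cjMarg_empty hU]
  | insert a s ha ih =>
    erw [Finset.noncommProd_insert_of_notMem _ _ _ _ ha, ih, Finset.coe_insert, Set.insert_eq,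
      cjMarg_mul_of_disjoint hU (Set.disjoint_singleton_left.2 ha)]

lemma cjMarg_merge_apply (U : Matrix (Idx ιo dO) (Idx ιi dI) ℂ) (T : Set ιo)
    (u v : Idx (outputsWithInputs Tᶜ : Set (ιo ⊕ ιi)) (fun i => Sum.elim dO dI i.1))
    (t : Idx ((outputsWithInputs Tᶜ)ᶜ : Set (ιo ⊕ ιi)) (fun i => Sum.elim dO dI i.1)) :
    cjMarg U T (merge _ _ u t) (merge _ _ v t) =
      if ∀ l (hl : l ∉ T), u ⟨.inl l, hl⟩ = v ⟨.inl l, hl⟩ then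
        ∑ c, if restr _ (outputsWithInputs Tᶜ)ᶜ (sumIdx c (inputsOf u)) = t then
          U c (inputsOf u) * star (U c (inputsOf v)) else 0 else 0 := by
  have hO : (∀ l, l ∉ T → merge _ _ u t (.inl l) = merge _ _ v t (.inl l)) ↔
      ∀ l (hl : l ∉ T), u ⟨.inl l, hl⟩ = v ⟨.inl l, hl⟩ :=
    forall₂_congr fun l hl => by rw [merge_of_mem _ _ hl, merge_of_mem _ _ hl]
  have hI : ∀ w, (fun j => merge _ _ w t (.inr j)) = inputsOf w :=
    fun w => funext fun j => merge_of_mem _ _ (inr_mem_outputsWithInputs j)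
  have hT : ∀ w c, (∀ l ∈ T, c l = merge _ _ w t (.inl l)) ↔
      restr _ (outputsWithInputs Tᶜ)ᶜ (sumIdx c (inputsOf u)) = t := by
    refine fun w c => ⟨fun h => funext ?_, fun h l hl => ?_⟩
    · rintro ⟨l | j, hl⟩
      · exact (h l (not_not.1 hl)).trans (merge_of_notMem _ _ hl)
      · exact absurd (inr_mem_outputsWithInputs j) hl
    · rw [merge_of_notMem _ _ (not_not.2 hl), ← h]
      rfl
  rw [cjMarg_apply]
  simp only [hO, hI, hT u]
  split_ifs
  · refine Finset.sum_congr rfl fun c _ => ?_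
    split_ifs with hc
    · congr 3
      funext l
      by_cases hl : l ∈ T
      · exact (if_pos hl).trans ((hT v c).2 hc l hl).symm
      · exact if_neg hl
    · rfl
  · rfl

lemma marg_cjMarg (hU : IsUnitaryMat dO dI U) (T : Set ιo) :
    marg (Sum.elim dO dI) (outputsWithInputs Tᶜ) (cjMarg U T) = 1 := by
  ext u v
  have huv : u = v ↔ (∀ l (hl : l ∉ T), u ⟨.inl l, hl⟩ = v ⟨.inl l, hl⟩) ∧
      inputsOf u = inputsOf v :=
    ⟨by rintro rfl; exact ⟨fun _ _ => rfl, rfl⟩, fun ⟨hO, hI⟩ => funext <| by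
      rintro ⟨l | j, hl⟩
      exacts [hO l hl, congrFun hI j]⟩
  rw [marg_apply, one_apply]
  simp only [cjMarg_merge_apply, huv, ite_and, Finset.sum_ite_irrel, Finset.sum_const_zero]
  rw [Finset.sum_comm]
  simp only [Finset.sum_ite_eq, Finset.mem_univ, if_true, hU.sum_mul_star]

end UnitaryChannel

theorem unitary_channel_factorization_general
    (n k : ℕ) (dA : Fin n → ℕ) (dB : Fin k → ℕ)
    (U : Matrix (Idx (Fin k) dB) (Idx (Fin n) dA) ℂ)
    (hU : IsUnitaryMat dB dA U)
    (S : Fin k → Set (Fin n))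
    (hni : ∀ i : Fin k, ∀ j : Fin n, j ∉ S i → NoInfl dB dA U j {i}) :
    ∃ ρ : Fin k → Matrix (Idx (Fin k ⊕ Fin n) (Sum.elim dB dA))
                          (Idx (Fin k ⊕ Fin n) (Sum.elim dB dA)) ℂ,
      -- each `ρ i` acts only on the output factor `B i` and the input factors in `S i`
      (∀ i, ActsOn (Sum.elim dB dA)
          {l | l = Sum.inl i ∨ ∃ j ∈ S i, l = Sum.inr j} (ρ i)) ∧
      -- each `ρ i` is (the padding of) the CJ operator of a channel into `B i`
      (∀ i, (ρ i).PosSemidef) ∧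
      (∀ i, marg (Sum.elim dB dA) {l | l ≠ Sum.inl i} (ρ i) = 1) ∧
      -- they pairwise commute and their product is the CJ operator of the channel of `U`
      ∃ hc : ∀ i i', Commute (ρ i) (ρ i'),
        cjOp dB dA U = Finset.univ.noncommProd ρ fun a _ b _ _ => hc a b := by
  refine ⟨fun i => cjMarg U {i}, fun i => ?_, fun i => posSemidef_cjMarg U {i}, fun i => ?_,
    commute_cjMarg_singleton hU, ?_⟩
  · have hset : {l | l = Sum.inl i ∨ ∃ j ∈ S i, l = Sum.inr j} =
        {l | Sum.elim (· ∈ ({i} : Set (Fin k))) (· ∈ S i) l} := by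
      ext (o | j) <;> simp
    rw [hset]
    exact actsOn_cjMarg (hni i)
  · have hset : {l | l ≠ Sum.inl i} = outputsWithInputs (ιi := Fin n) ({i} : Set (Fin k))ᶜ := by
      ext (o | j) <;> simp [outputsWithInputs]
    rw [hset]
    exact marg_cjMarg hU {i}
  · rw [noncommProd_cjMarg_singleton hU, Finset.coe_univ, cjMarg_univ]

/-- **Factorization of a unitary channel from no-influence conditions.**
If, for each output `B i`, all inputs outside `S i` do not influence `B i`, then the
CJ operator of the unitary channel factorizes into pairwise commuting (padded) CJ
operators of channels `ρ_{B_i | S_i}` from the inputs in `S i` to the output `B i`. -/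
theorem unitary_channel_factorization
    (n k : ℕ) (dA : Fin n → ℕ) (dB : Fin k → ℕ)
    (hdim : ∏ j, dA j = ∏ i, dB i)
    (U : Matrix (Idx (Fin k) dB) (Idx (Fin n) dA) ℂ)
    (hU : IsUnitaryMat dB dA U)
    (S : Fin k → Set (Fin n))
    (hni : ∀ i : Fin k, ∀ j : Fin n, j ∉ S i → NoInfl dB dA U j {i}) :
    ∃ ρ : Fin k → Matrix (Idx (Fin k ⊕ Fin n) (Sum.elim dB dA))
                          (Idx (Fin k ⊕ Fin n) (Sum.elim dB dA)) ℂ,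
      -- each `ρ i` acts only on the output factor `B i` and the input factors in `S i`
      (∀ i, ActsOn (Sum.elim dB dA)
          {l | l = Sum.inl i ∨ ∃ j ∈ S i, l = Sum.inr j} (ρ i)) ∧
      -- each `ρ i` is (the padding of) the CJ operator of a channel into `B i`
      (∀ i, (ρ i).PosSemidef) ∧
      (∀ i, marg (Sum.elim dB dA) {l | l ≠ Sum.inl i} (ρ i) = 1) ∧
      -- they pairwise commute and their product is the CJ operator of the channel of `U`
      ∃ hc : ∀ i i', Commute (ρ i) (ρ i'),
        cjOp dB dA U = Finset.univ.noncommProd ρ fun a _ b _ _ => hc a b :=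
  unitary_channel_factorization_general n k dA dB U hU S hni

end QCM
end
end

section
/- Call a CJ operator ρ_{B|A} of a channel from H_A to H_B a reduced unitary if there exist a finite-dimensional Hilbert space H_F and a unitary U : H_A → H_B ⊗ H_F such that ρ_{B|A} equals the partial trace over H_F of the CJ operator of the channel ρ ↦ UρU†. If ρ_{B|A} and ρ_{C|A} are reduced unitaries (CJ operators of channels from H_A to H_B and from H_A to H_C, respectively) which, padded with identities so that both act on H_B ⊗ H_C ⊗ H_A, commute, then the product ρ_{B|A}·ρ_{C|A} is a reduced unitary: there exist a finite-dimensional H_G and a unitary W : H_A → H_B ⊗ H_C ⊗ H_G such that ρ_{B|A}·ρ_{C|A} equals the partial trace over H_G of the CJ operator of the channel ρ ↦ WρW†. -/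
/-!
Write `E b b'` for the `A × A` block of `ρ_{B|A}` at `(b, b')`. If `ρ_{B|A}` comes from a unitary
`U : A → B ⊗ F`, then `E b b' = V_bᴴ V_{b'}`, where `V_b` is the `F × A` block of rows of the
unitary `V = Ū`; hence the `E b b'` form a complete system of matrix units in `M_A`. Conversely,
every complete system of matrix units `(E i j)` in `M_A` arises this way: if the columns of `N`
are an orthonormal basis of the range of the projection `E i₀ i₀`, the rows of `Nᴴ E i₀ i`,
over all `i`, are the rows of a unitary `W` with `E i j = W_iᴴ W_j`, the ancilla being the range
of `E i₀ i₀`. Two commuting complete systems `E b b'`, `E' c c'` multiply to a complete system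
`E b b' * E' c c'` indexed by `B × C`, and these are exactly the blocks of `ρ_{B|A} ρ_{C|A}`.
-/

open scoped Classical ComplexOrder
open BigOperators Matrix

noncomputable section

/-- The CJ operator `ρ : Matrix (B × A) (B × A) ℂ` of a channel from `H_A` to `H_B`
is a *reduced unitary* if it is the partial trace over an ancillary output `H_F` of
the CJ operator of a unitary channel `ρ ↦ U ρ U†`, `U : H_A → H_B ⊗ H_F`. -/
def IsReducedUnitary (dA dB : ℕ) (ρ : Matrix (Fin dB × Fin dA) (Fin dB × Fin dA) ℂ) :
    Prop :=
  ∃ (dF : ℕ) (U : Matrix (Fin dB × Fin dF) (Fin dA) ℂ),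
    (∀ u v, ∑ a, U u a * star (U v a) = if u = v then 1 else 0) ∧
    (∀ a a', ∑ u, star (U u a) * U u a' = if a = a' then 1 else 0) ∧
    (∀ (b b' : Fin dB) (a a' : Fin dA),
      ρ (b, a) (b', a') = ∑ x : Fin dF, U (b, x) a * star (U (b', x) a'))

namespace Matrix

variable {α ι κ F n : Type*}

def blockRow (W : Matrix (ι × F) n α) (i : ι) : Matrix F n α :=
  of fun x a => W (i, x) a

structure IsMatrixUnits [Fintype n] [DecidableEq n] [Fintype ι] [DecidableEq ι] [Semiring α]
    [Star α] (E : ι → ι → Matrix n n α) : Prop where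
  mul_eq : ∀ i j k l, E i j * E k l = if j = k then E i l else 0
  conjTranspose_eq : ∀ i j, (E i j)ᴴ = E j i
  sum_diag_eq_one : ∑ i, E i i = 1

theorem sum_mul_star_eq_ite_iff [CommSemiring α] [StarRing α] {m : Type*} [Fintype n]
    [DecidableEq m] {U : Matrix m n α} :
    (∀ u v, ∑ a, U u a * star (U v a) = if u = v then 1 else 0) ↔
      U.map star * (U.map star)ᴴ = 1 := by
  simp only [← Matrix.ext_iff, mul_apply, map_apply, conjTranspose_apply, star_star, one_apply]
  exact ⟨fun h u v => by simpa [mul_comm, eq_comm] using h v u,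
    fun h u v => by simpa [mul_comm, eq_comm] using h v u⟩

theorem sum_star_mul_eq_ite_iff [CommSemiring α] [StarRing α] {m : Type*} [Fintype m]
    [DecidableEq n] {U : Matrix m n α} :
    (∀ a a', ∑ u, star (U u a) * U u a' = if a = a' then 1 else 0) ↔
      (U.map star)ᴴ * U.map star = 1 := by
  simp only [← Matrix.ext_iff, mul_apply, map_apply, conjTranspose_apply, star_star, one_apply]
  exact ⟨fun h u v => by simpa [mul_comm, eq_comm] using h v u,
    fun h u v => by simpa [mul_comm, eq_comm] using h v u⟩

theorem mul_conjTranspose_eq_one_iff_blockRow [Semiring α] [Star α] [Fintype n]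
    [DecidableEq ι] [DecidableEq F] {W : Matrix (ι × F) n α} :
    W * Wᴴ = 1 ↔ ∀ i j, W.blockRow i * (W.blockRow j)ᴴ = if i = j then 1 else 0 := by
  simp only [← Matrix.ext_iff, Prod.forall, blockRow, mul_apply, conjTranspose_apply, of_apply]
  constructor
  · intro h i j x y
    split_ifs with hij <;> simp [h, one_apply, hij]
  · intro h i x j y
    rw [h i j x y]
    split_ifs with hij <;> simp [one_apply, hij]

theorem conjTranspose_mul_self_eq_sum_blockRow [Semiring α] [Star α] [Fintype ι]
    [Fintype F] (W : Matrix (ι × F) n α) :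
    Wᴴ * W = ∑ i, (W.blockRow i)ᴴ * W.blockRow i := by
  ext a a'
  simp [mul_apply, Matrix.sum_apply, Fintype.sum_prod_type, blockRow]

section MatrixUnits

variable [Fintype n] [DecidableEq n] [Fintype ι] [DecidableEq ι]

theorem isMatrixUnits_blockRow [Semiring α] [StarRing α] [Fintype F] [DecidableEq F]
    {W : Matrix (ι × F) n α} (hWW : W * Wᴴ = 1) (hWW' : Wᴴ * W = 1) :
    IsMatrixUnits fun i j => (W.blockRow i)ᴴ * W.blockRow j where
  mul_eq i j k l := by
    rw [Matrix.mul_assoc, ← Matrix.mul_assoc (W.blockRow j),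
      mul_conjTranspose_eq_one_iff_blockRow.mp hWW]
    split_ifs <;> simp
  conjTranspose_eq i j := by simp [conjTranspose_mul]
  sum_diag_eq_one := by rw [← conjTranspose_mul_self_eq_sum_blockRow, hWW']

theorem IsMatrixUnits.mul [Semiring α] [StarRing α] [Fintype κ] [DecidableEq κ]
    {E : ι → ι → Matrix n n α} {E' : κ → κ → Matrix n n α} (hE : IsMatrixUnits E)
    (hE' : IsMatrixUnits E') (hcomm : ∀ i j k l, Commute (E i j) (E' k l)) :
    IsMatrixUnits fun p q : ι × κ => E p.1 q.1 * E' p.2 q.2 where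
  mul_eq p q r s := by
    have hswap : E p.1 q.1 * E' p.2 q.2 * (E r.1 s.1 * E' r.2 s.2) =
        E p.1 q.1 * E r.1 s.1 * (E' p.2 q.2 * E' r.2 s.2) := by
      rw [Matrix.mul_assoc, ← Matrix.mul_assoc (E' p.2 q.2), ← (hcomm r.1 s.1 p.2 q.2).eq,
        Matrix.mul_assoc, Matrix.mul_assoc]
    rw [hswap, hE.mul_eq, hE'.mul_eq]
    by_cases h1 : q.1 = r.1 <;> by_cases h2 : q.2 = r.2 <;> simp [h1, h2, Prod.ext_iff]
  conjTranspose_eq p q := by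
    rw [conjTranspose_mul, hE.conjTranspose_eq, hE'.conjTranspose_eq, (hcomm q.1 p.1 q.2 p.2).eq]
  sum_diag_eq_one := by
    rw [Fintype.sum_prod_type]
    simp only [← Finset.mul_sum, ← Finset.sum_mul, hE.sum_diag_eq_one, hE'.sum_diag_eq_one, one_mul]

theorem exists_isometry_mul_conjTranspose_eq {𝕜 : Type*} [RCLike 𝕜] {P : Matrix n n 𝕜}
    (hP : P.IsHermitian) (hPP : P * P = P) :
    ∃ (r : ℕ) (N : Matrix n (Fin r) 𝕜), Nᴴ * N = 1 ∧ N * Nᴴ = P := by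
  have hp : (toEuclideanLin P).IsSymmetricProjection :=
    ⟨by rw [IsIdempotentElem, Module.End.mul_eq_comp, ← toLpLin_mul, hPP],
      isSymmetric_toEuclideanLin_iff.mpr hP⟩
  obtain ⟨_, hpK⟩ := LinearMap.isSymmetricProjection_iff_eq_coe_starProjection_range.mp hp
  let b := stdOrthonormalBasis 𝕜 (LinearMap.range (toEuclideanLin P))
  refine ⟨_, of fun x k => (b k : EuclideanSpace 𝕜 n) x, ?_, ?_⟩
  · ext k l
    simpa [mul_apply, one_apply, EuclideanSpace.inner_eq_star_dotProduct, dotProduct, mul_comm]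
      using orthonormal_iff_ite.mp b.orthonormal k l
  · ext x y
    have hcol := congr($hpK (EuclideanSpace.single y 1) x)
    rw [b.starProjection_eq_sum_rankOne] at hcol
    simpa [mul_apply, mul_comm, EuclideanSpace.inner_single_right] using hcol.symm

theorem IsMatrixUnits.exists_unitary {𝕜 : Type*} [RCLike 𝕜] {E : ι → ι → Matrix n n 𝕜}
    (hE : IsMatrixUnits E) :
    ∃ (r : ℕ) (W : Matrix (ι × Fin r) n 𝕜), W * Wᴴ = 1 ∧ Wᴴ * W = 1 ∧
      ∀ i j, E i j = (W.blockRow i)ᴴ * W.blockRow j := by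
  rcases isEmpty_or_nonempty ι with _ | ⟨⟨i₀⟩⟩
  · refine ⟨0, 0, Subsingleton.elim _ _, ?_, fun i => isEmptyElim i⟩
    rw [← hE.sum_diag_eq_one]
    simp
  obtain ⟨r, N, hNN, hNP⟩ := exists_isometry_mul_conjTranspose_eq (hE.conjTranspose_eq i₀ i₀)
    (by simpa using hE.mul_eq i₀ i₀ i₀ i₀)
  let W : Matrix (ι × Fin r) n 𝕜 := of fun p a => (Nᴴ * E i₀ p.1) p.2 a
  have hblock : ∀ i, W.blockRow i = Nᴴ * E i₀ i := fun i => rfl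
  have hrep : ∀ i j, (W.blockRow i)ᴴ * W.blockRow j = E i j := by
    intro i j
    rw [hblock, hblock, conjTranspose_mul, conjTranspose_conjTranspose, hE.conjTranspose_eq,
      Matrix.mul_assoc, ← Matrix.mul_assoc N, ← Matrix.mul_assoc, hNP, hE.mul_eq, if_pos rfl,
      hE.mul_eq, if_pos rfl]
  refine ⟨r, W, ?_, ?_, fun i j => (hrep i j).symm⟩
  · refine mul_conjTranspose_eq_one_iff_blockRow.mpr fun i j => ?_
    rw [hblock, hblock, conjTranspose_mul, conjTranspose_conjTranspose, hE.conjTranspose_eq,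
      Matrix.mul_assoc, ← Matrix.mul_assoc (E i₀ i), hE.mul_eq]
    split_ifs
    · rw [← hNP, Matrix.mul_assoc N, hNN, Matrix.mul_one, hNN]
    · simp
  · simp only [conjTranspose_mul_self_eq_sum_blockRow, hrep, hE.sum_diag_eq_one]

theorem isMatrixUnits_of_sum_mul_star [CommSemiring α] [StarRing α] [Fintype F] [DecidableEq F]
    {U : Matrix (ι × F) n α} {ρ : Matrix (ι × n) (ι × n) α}
    (hUU : ∀ u v, ∑ a, U u a * star (U v a) = if u = v then 1 else 0)
    (hUU' : ∀ a a', ∑ u, star (U u a) * U u a' = if a = a' then 1 else 0)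
    (hρ : ∀ i j a a', ρ (i, a) (j, a') = ∑ x, U (i, x) a * star (U (j, x) a')) :
    IsMatrixUnits ((comp ι ι n n α).symm ρ) := by
  have hblocks : (comp ι ι n n α).symm ρ =
      fun i j => ((U.map star).blockRow i)ᴴ * (U.map star).blockRow j := by
    ext i j a a'
    simp [hρ, blockRow, mul_apply]
  rw [hblocks]
  exact isMatrixUnits_blockRow (sum_mul_star_eq_ite_iff.mp hUU) (sum_star_mul_eq_ite_iff.mp hUU')

theorem IsMatrixUnits.exists_sum_mul_star {𝕜 : Type*} [RCLike 𝕜] {E : ι → ι → Matrix n n 𝕜}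
    (hE : IsMatrixUnits E) :
    ∃ (r : ℕ) (U : Matrix (ι × Fin r) n 𝕜),
      (∀ u v, ∑ a, U u a * star (U v a) = if u = v then 1 else 0) ∧
      (∀ a a', ∑ u, star (U u a) * U u a' = if a = a' then 1 else 0) ∧
      ∀ i j a a', E i j a a' = ∑ x, U (i, x) a * star (U (j, x) a') := by
  obtain ⟨r, W, hWW, hWW', hEW⟩ := hE.exists_unitary
  have hW : (W.map star).map star = W := by ext; simp
  refine ⟨r, W.map star, ?_, ?_, fun i j a a' => ?_⟩
  · rwa [sum_mul_star_eq_ite_iff, hW]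
  · rwa [sum_star_mul_eq_ite_iff, hW]
  · simp [hEW, blockRow, mul_apply]

end MatrixUnits

def padMiddle {β : Type*} [MulZeroOneClass α] (γ : Type*) [DecidableEq γ]
    (ρ : Matrix (β × n) (β × n) α) :
    Matrix (β × γ × n) (β × γ × n) α :=
  of fun p q => ρ (p.1, p.2.2) (q.1, q.2.2) * if p.2.1 = q.2.1 then 1 else 0

def padLeft {γ : Type*} [MulZeroOneClass α] (β : Type*) [DecidableEq β]
    (ρ : Matrix (γ × n) (γ × n) α) :
    Matrix (β × γ × n) (β × γ × n) α :=
  of fun p q => ρ (p.2.1, p.2.2) (q.2.1, q.2.2) * if p.1 = q.1 then 1 else 0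

section Padding

variable {β γ : Type*} [Semiring α] [Fintype β] [DecidableEq β] [Fintype γ] [DecidableEq γ]
  [Fintype n]
  (ρB : Matrix (β × n) (β × n) α) (ρC : Matrix (γ × n) (γ × n) α)

theorem padMiddle_mul_padLeft_apply (b b' : β) (c c' : γ) (a a' : n) :
    (padMiddle γ ρB * padLeft β ρC) (b, c, a) (b', c', a') =
      ((comp β β n n α).symm ρB b b' * (comp γ γ n n α).symm ρC c c') a a' := by
  simp [padMiddle, padLeft, mul_apply, Fintype.sum_prod_type, ite_mul, mul_ite]

theorem padLeft_mul_padMiddle_apply (b b' : β) (c c' : γ) (a a' : n) :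
    (padLeft β ρC * padMiddle γ ρB) (b, c, a) (b', c', a') =
      ((comp γ γ n n α).symm ρC c c' * (comp β β n n α).symm ρB b b') a a' := by
  simp [padMiddle, padLeft, mul_apply, Fintype.sum_prod_type, ite_mul, mul_ite]

theorem commute_comp_symm_of_commute_pad (h : Commute (padMiddle γ ρB) (padLeft β ρC))
    (b b' : β) (c c' : γ) :
    Commute ((comp β β n n α).symm ρB b b') ((comp γ γ n n α).symm ρC c c') := by
  ext a a'
  simpa [padMiddle_mul_padLeft_apply, padLeft_mul_padMiddle_apply] using
    congr($h.eq (b, c, a) (b', c', a'))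

end Padding
end Matrix

theorem IsReducedUnitary.isMatrixUnits {dA dB : ℕ}
    {ρ : Matrix (Fin dB × Fin dA) (Fin dB × Fin dA) ℂ} (h : IsReducedUnitary dA dB ρ) :
    IsMatrixUnits ((comp _ _ _ _ ℂ).symm ρ) :=
  let ⟨_, _, hUU, hUU', hρ⟩ := h
  isMatrixUnits_of_sum_mul_star hUU hUU' hρ

theorem product_of_commuting_reduced_unitaries_general
    (dA dB dC : ℕ)
    (ρB : Matrix (Fin dB × Fin dA) (Fin dB × Fin dA) ℂ)
    (ρC : Matrix (Fin dC × Fin dA) (Fin dC × Fin dA) ℂ)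
    (hB : IsReducedUnitary dA dB ρB)
    (hC : IsReducedUnitary dA dC ρC)
    (hcomm : Commute
      (Matrix.of fun p q : Fin dB × Fin dC × Fin dA =>
        ρB (p.1, p.2.2) (q.1, q.2.2) * (if p.2.1 = q.2.1 then (1 : ℂ) else 0))
      (Matrix.of fun p q : Fin dB × Fin dC × Fin dA =>
        ρC (p.2.1, p.2.2) (q.2.1, q.2.2) * (if p.1 = q.1 then (1 : ℂ) else 0))) :
    ∃ (dG : ℕ) (W : Matrix ((Fin dB × Fin dC) × Fin dG) (Fin dA) ℂ),
      (∀ u v, ∑ a, W u a * star (W v a) = if u = v then 1 else 0) ∧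
      (∀ a a', ∑ u, star (W u a) * W u a' = if a = a' then 1 else 0) ∧
      (∀ p q : Fin dB × Fin dC × Fin dA,
        ((Matrix.of fun p q : Fin dB × Fin dC × Fin dA =>
            ρB (p.1, p.2.2) (q.1, q.2.2) * (if p.2.1 = q.2.1 then (1 : ℂ) else 0)) *
         (Matrix.of fun p q : Fin dB × Fin dC × Fin dA =>
            ρC (p.2.1, p.2.2) (q.2.1, q.2.2) * (if p.1 = q.1 then (1 : ℂ) else 0))) p q
        = ∑ x : Fin dG, W ((p.1, p.2.1), x) p.2.2 * star (W ((q.1, q.2.1), x) q.2.2)) := by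
  have hBC := hB.isMatrixUnits.mul hC.isMatrixUnits (commute_comp_symm_of_commute_pad ρB ρC hcomm)
  obtain ⟨dG, W, hWW, hWW', hW⟩ := hBC.exists_sum_mul_star
  refine ⟨dG, W, hWW, hWW', fun ⟨b, c, a⟩ ⟨b', c', a'⟩ => ?_⟩
  exact (padMiddle_mul_padLeft_apply ρB ρC b b' c c' a a').trans (hW (b, c) (b', c') a a')

/-- **Products of commuting reduced unitaries are reduced unitaries.**
If `ρB = ρ_{B|A}` and `ρC = ρ_{C|A}` are reduced unitaries whose paddings to
`H_B ⊗ H_C ⊗ H_A` commute, then their product is a reduced unitary, i.e. arises by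
tracing out an ancilla from the CJ operator of a unitary channel
`W : H_A → H_B ⊗ H_C ⊗ H_G`. -/
theorem product_of_commuting_reduced_unitaries
    (dA dB dC : ℕ)
    (ρB : Matrix (Fin dB × Fin dA) (Fin dB × Fin dA) ℂ)
    (ρC : Matrix (Fin dC × Fin dA) (Fin dC × Fin dA) ℂ)
    (hBpsd : ρB.PosSemidef)
    (hBtr : ∀ a a', ∑ b, ρB (b, a) (b, a') = if a = a' then 1 else 0)
    (hCpsd : ρC.PosSemidef)
    (hCtr : ∀ a a', ∑ c, ρC (c, a) (c, a') = if a = a' then 1 else 0)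
    (hB : IsReducedUnitary dA dB ρB)
    (hC : IsReducedUnitary dA dC ρC)
    (hcomm : Commute
      (Matrix.of fun p q : Fin dB × Fin dC × Fin dA =>
        ρB (p.1, p.2.2) (q.1, q.2.2) * (if p.2.1 = q.2.1 then (1 : ℂ) else 0))
      (Matrix.of fun p q : Fin dB × Fin dC × Fin dA =>
        ρC (p.2.1, p.2.2) (q.2.1, q.2.2) * (if p.1 = q.1 then (1 : ℂ) else 0))) :
    ∃ (dG : ℕ) (W : Matrix ((Fin dB × Fin dC) × Fin dG) (Fin dA) ℂ),
      (∀ u v, ∑ a, W u a * star (W v a) = if u = v then 1 else 0) ∧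
      (∀ a a', ∑ u, star (W u a) * W u a' = if a = a' then 1 else 0) ∧
      (∀ p q : Fin dB × Fin dC × Fin dA,
        ((Matrix.of fun p q : Fin dB × Fin dC × Fin dA =>
            ρB (p.1, p.2.2) (q.1, q.2.2) * (if p.2.1 = q.2.1 then (1 : ℂ) else 0)) *
         (Matrix.of fun p q : Fin dB × Fin dC × Fin dA =>
            ρC (p.2.1, p.2.2) (q.2.1, q.2.2) * (if p.1 = q.1 then (1 : ℂ) else 0))) p q
        = ∑ x : Fin dG, W ((p.1, p.2.1), x) p.2.2 * star (W ((q.1, q.2.1), x) q.2.2)) :=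
  product_of_commuting_reduced_unitaries_general dA dB dC ρB ρC hB hC hcomm
end
end

section
/- Let κ be a classical process map over the disjoint union of finite sets Y, Z, W of classical split nodes. Then the following are equivalent: (1) there exist real-valued functions α of (Y^in, Y^out, W^in, W^out) and β of (Z^in, Z^out, W^in, W^out) such that κ = α·β; (2) for every local intervention at Y with outcome k_Y, every local intervention at Z with outcome k_Z, and every maximally informative local intervention at W with outcome k_W, the joint outcome distribution satisfies P(k_Y, k_Z, k_W)·P(k_W) = P(k_Y, k_W)·P(k_Z, k_W) for all outcome values, where marginals are obtained by summation. -/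
open scoped Classical
open BigOperators

noncomputable section

namespace QCM

/-! ## Classical split nodes -/

/-- A joint assignment of values to the input (`false`) and output (`true`) variables
of a family of classical split nodes. -/
abbrev CAsg (V : Type) (val : V → ℕ) : Type := ∀ p : V × Bool, Fin (val p.1)

/-- `F` depends only on the variables (legs) in `L`. -/
def DependsOnlyOn {V : Type} {val : V → ℕ} (L : Set (V × Bool))
    (F : CAsg V val → ℝ) : Prop :=
  ∀ ω ω' : CAsg V val, (∀ p ∈ L, ω p = ω' p) → F ω = F ω'

/-- A classical channel `P(out | in)` on a set of cardinality `n`. -/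
def IsCChannel {n : ℕ} (P : Fin n → Fin n → ℝ) : Prop :=
  (∀ i o, 0 ≤ P i o) ∧ ∀ i, ∑ o, P i o = 1

/-- A classical process map over the split nodes `V`. -/
def IsCProcess {V : Type} [Fintype V] (val : V → ℕ) (κ : CAsg V val → ℝ) : Prop :=
  (∀ ω, 0 ≤ κ ω ∧ κ ω ≤ 1) ∧
    ∀ chan : ∀ a, Fin (val a) → Fin (val a) → ℝ, (∀ a, IsCChannel (chan a)) →
      ∑ ω : CAsg V val, κ ω * ∏ a, chan a (ω (a, false)) (ω (a, true)) = 1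

/-- A classical instrument `P(k, out | in)` with outcomes in `Fin m`. -/
def IsCInstrument {n m : ℕ} (q : Fin m → Fin n → Fin n → ℝ) : Prop :=
  (∀ k i o, 0 ≤ q k i o) ∧ ∀ i, ∑ k, ∑ o, q k i o = 1

/-- A maximally informative classical instrument. -/
def IsMaxInf {n m : ℕ} (q : Fin m → Fin n → Fin n → ℝ) : Prop :=
  ∃ gin : Fin m → Fin n, Function.Surjective gin ∧
    ∃ gout : Fin m → Fin n, ∀ k i o, q k i o ≠ 0 → i = gin k ∧ o = gout k

/-- Override the assignment `ω` on the legs in `T` by the values `t`. -/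
def ovr {V : Type} {val : V → ℕ} (T : Set (V × Bool)) (ω : CAsg V val)
    (t : ∀ p : ↥T, Fin (val p.1.1)) : CAsg V val :=
  fun p => if h : p ∈ T then t ⟨p, h⟩ else ω p


/-- Joint outcome probability for a choice of classical instruments at all nodes. -/
def cOutcomeProb {V : Type} [Fintype V] (val : V → ℕ) (κ : CAsg V val → ℝ)
    (m : V → ℕ) (q : ∀ a, Fin (m a) → Fin (val a) → Fin (val a) → ℝ)
    (k : ∀ a, Fin (m a)) : ℝ :=
  ∑ ω : CAsg V val, κ ω * ∏ a, q a (k a) (ω (a, false)) (ω (a, true))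

/-! ## observation instrument -/

def obsQ {n : ℕ} (kk : Fin (n * n)) (i o : Fin n) : ℝ :=
  if (finProdFinEquiv.symm kk).1 = i ∧ (finProdFinEquiv.symm kk).2 = o then ((n : ℝ))⁻¹ else 0

lemma obsQ_instrument {n : ℕ} (hn : 0 < n) : IsCInstrument (obsQ (n := n)) := by
  constructor
  · intro k i o
    unfold obsQ
    split <;> positivity
  · intro i
    rw [← finProdFinEquiv.sum_comp]
    simp only [obsQ, Equiv.symm_apply_apply]
    rw [Fintype.sum_prod_type]
    simp [Finset.sum_ite_eq', ite_and, Finset.mul_sum, Finset.sum_ite_eq]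
    exact mul_inv_cancel₀ (Nat.cast_pos (α := ℝ) |>.mpr hn).ne'

lemma obsQ_maxinf {n : ℕ} : IsMaxInf (obsQ (n := n)) := by
  refine ⟨fun k => (finProdFinEquiv.symm k).1, ?_, fun k => (finProdFinEquiv.symm k).2, ?_⟩
  · intro i
    by_cases hn : 0 < n
    · exact ⟨finProdFinEquiv (i, i), by simp⟩
    · exact absurd i.2 (by omega)
  · intro k i o h
    unfold obsQ at h
    by_cases hc : (finProdFinEquiv.symm k).1 = i ∧ (finProdFinEquiv.symm k).2 = o
    · exact ⟨hc.1.symm, hc.2.symm⟩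
    · rw [if_neg hc] at h; exact absurd rfl h

def obsE {V : Type} (val : V → ℕ) : (∀ a, Fin (val a * val a)) ≃ CAsg V val where
  toFun k := fun p =>
    if p.2 then (finProdFinEquiv.symm (k p.1)).2 else (finProdFinEquiv.symm (k p.1)).1
  invFun ω := fun a => finProdFinEquiv (ω (a, false), ω (a, true))
  left_inv k := by funext a; exact finProdFinEquiv.apply_symm_apply (k a)
  right_inv ω := by
    funext p
    obtain ⟨a, b⟩ := p
    cases b <;> simp

variable {V : Type} [Fintype V]

lemma obsE_legs {val : V → ℕ} (k : ∀ a, Fin (val a * val a)) (a : V) :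
    obsE val k (a, false) = (finProdFinEquiv.symm (k a)).1 ∧
    obsE val k (a, true) = (finProdFinEquiv.symm (k a)).2 := ⟨rfl, rfl⟩

lemma obs_prod {val : V → ℕ} (k : ∀ a, Fin (val a * val a)) (ω : CAsg V val) :
    (∏ a : V, obsQ (k a) (ω (a, false)) (ω (a, true)))
    = if ω = obsE val k then ∏ a : V, ((val a : ℝ))⁻¹ else 0 := by
  by_cases h : ω = obsE val k
  · rw [if_pos h, h]
    refine Finset.prod_congr rfl fun a _ => ?_
    unfold obsQ
    rw [if_pos ⟨rfl, rfl⟩]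
  · rw [if_neg h]
    have : ∃ p : V × Bool, ω p ≠ obsE val k p := by
      by_contra hc
      push_neg at hc
      exact h (funext hc)
    obtain ⟨p, hp⟩ := this
    apply Finset.prod_eq_zero (Finset.mem_univ p.1)
    unfold obsQ
    rw [if_neg]
    intro hc
    obtain ⟨a, b⟩ := p
    cases b
    · exact hp hc.1.symm
    · exact hp hc.2.symm

lemma obs_prob {val : V → ℕ} (κ : CAsg V val → ℝ) (k : ∀ a, Fin (val a * val a)) :
    cOutcomeProb val κ (fun a => val a * val a) (fun a => obsQ) k
    = (∏ a : V, ((val a : ℝ))⁻¹) * κ (obsE val k) := by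
  unfold cOutcomeProb
  simp_rw [obs_prod, mul_ite, mul_zero]
  rw [Finset.sum_ite_eq' Finset.univ (obsE val k)]
  simp [mul_comm]

lemma obs_cond {val : V → ℕ} (S : Set V) (k k' : ∀ a, Fin (val a * val a)) :
    (∀ a ∈ S, k' a = k a) ↔
    (∀ p : V × Bool, p.1 ∈ S → obsE val k' p = obsE val k p) := by
  constructor
  · intro h p hp
    obtain ⟨a, b⟩ := p
    cases b <;> simp only [obsE, Equiv.coe_fn_mk] <;> rw [h a hp]
  · intro h a ha
    have h1 := h (a, false) ha
    have h2 := h (a, true) ha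
    simp only [obsE, Equiv.coe_fn_mk, if_true, if_false, Bool.false_eq_true] at h1 h2
    have : finProdFinEquiv.symm (k' a) = finProdFinEquiv.symm (k a) := Prod.ext h1 h2
    exact finProdFinEquiv.symm.injective this

lemma obs_marg {val : V → ℕ} (κ : CAsg V val → ℝ) (S : Set V)
    (k : ∀ a, Fin (val a * val a)) :
    (∑ k' : ∀ a, Fin (val a * val a),
      if ∀ a ∈ S, k' a = k a then
        cOutcomeProb val κ (fun a => val a * val a) (fun a => obsQ) k' else 0)
    = (∏ a : V, ((val a : ℝ))⁻¹) *
      ∑ ω' : CAsg V val,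
        if (∀ p : V × Bool, p.1 ∈ S → ω' p = obsE val k p) then κ ω' else 0 := by
  rw [Finset.mul_sum]
  simp_rw [mul_ite, mul_zero]
  rw [← (obsE val).sum_comp (fun ω' => if (∀ p : V × Bool, p.1 ∈ S → ω' p = obsE val k p)
      then (∏ a : V, ((val a : ℝ))⁻¹) * κ ω' else 0)]
  refine Finset.sum_congr rfl fun k' _ => ?_
  rw [obs_prob]
  by_cases h : ∀ a ∈ S, k' a = k a
  · rw [if_pos h, if_pos ((obs_cond S k k').mp h)]
  · rw [if_neg h, if_neg (fun hc => h ((obs_cond S k k').mpr hc))]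

lemma marg_dep {val : V → ℕ} (κ : CAsg V val → ℝ) (S S' : Set V) (hss : S ⊆ S') :
    DependsOnlyOn {p : V × Bool | p.1 ∈ S'}
      (fun ω => ∑ ω' : CAsg V val,
        if (∀ p : V × Bool, p.1 ∈ S → ω' p = ω p) then κ ω' else 0) := by
  intro ω ω₁ hag
  refine Finset.sum_congr rfl fun x _ => ?_
  by_cases hc : ∀ p : V × Bool, p.1 ∈ S → x p = ω p
  · rw [if_pos hc, if_pos (fun p hp => (hc p hp).trans (hag p (hss hp)))]
  · rw [if_neg hc, if_neg (fun hc' => hc fun p hp => (hc' p hp).trans (hag p (hss hp)).symm)]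

lemma prod_split3 (SY SZ SW : Set V)
    (hYZ : Disjoint SY SZ) (hYW : Disjoint SY SW) (hZW : Disjoint SZ SW)
    (hcover : SY ∪ SZ ∪ SW = Set.univ) (f : V → ℝ) :
    ∏ a : V, f a =
      (∏ a ∈ Finset.univ.filter (· ∈ SY), f a) *
      (∏ a ∈ Finset.univ.filter (· ∈ SZ), f a) *
      (∏ a ∈ Finset.univ.filter (· ∈ SW), f a) := by
  have hdYZ : Disjoint (Finset.univ.filter (· ∈ SY)) (Finset.univ.filter (· ∈ SZ)) := by
    rw [Finset.disjoint_left]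
    intro a ha hb
    simp only [Finset.mem_filter] at ha hb
    exact Set.disjoint_left.mp hYZ ha.2 hb.2
  have hdW : Disjoint ((Finset.univ.filter (· ∈ SY)) ∪ (Finset.univ.filter (· ∈ SZ)))
      (Finset.univ.filter (· ∈ SW)) := by
    rw [Finset.disjoint_left]
    intro a ha hb
    simp only [Finset.mem_union, Finset.mem_filter] at ha hb
    rcases ha with ha | ha
    · exact Set.disjoint_left.mp hYW ha.2 hb.2
    · exact Set.disjoint_left.mp hZW ha.2 hb.2
  have hU : (Finset.univ : Finset V) =
      ((Finset.univ.filter (· ∈ SY)) ∪ (Finset.univ.filter (· ∈ SZ))) ∪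
        (Finset.univ.filter (· ∈ SW)) := by
    ext a
    have hc : a ∈ SY ∪ SZ ∪ SW := hcover ▸ Set.mem_univ a
    simp only [Set.mem_union] at hc
    simp only [Finset.mem_univ, Finset.mem_union, Finset.mem_filter, true_and, true_iff]
    tauto
  calc ∏ a : V, f a
      = ∏ a ∈ ((Finset.univ.filter (· ∈ SY)) ∪ (Finset.univ.filter (· ∈ SZ))) ∪
          (Finset.univ.filter (· ∈ SW)), f a := by rw [← hU]
    _ = _ := by rw [Finset.prod_union hdW, Finset.prod_union hdYZ]

def sigk {val : V → ℕ} (hval : ∀ a, 0 < val a) (SW : Set V) {m : V → ℕ}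
    (gin gout : ∀ a, a ∈ SW → Fin (m a) → Fin (val a)) (k' : ∀ a, Fin (m a)) :
    CAsg V val :=
  fun p => if h : p.1 ∈ SW then
    (if p.2 then gout p.1 h (k' p.1) else gin p.1 h (k' p.1)) else ⟨0, hval p.1⟩

lemma sigk_congr {val : V → ℕ} (hval : ∀ a, 0 < val a) (SW : Set V) {m : V → ℕ}
    (gin gout : ∀ a, a ∈ SW → Fin (m a) → Fin (val a)) (k k' : ∀ a, Fin (m a))
    (h : ∀ a ∈ SW, k' a = k a) :
    sigk hval SW gin gout k' = sigk hval SW gin gout k := by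
  funext p
  unfold sigk
  by_cases hp : p.1 ∈ SW
  · simp only [dif_pos hp, h p.1 hp]
  · simp only [dif_neg hp]

lemma prodW_eq {val : V → ℕ} (hval : ∀ a, 0 < val a) (SW : Set V) {m : V → ℕ}
    (q : ∀ a, Fin (m a) → Fin (val a) → Fin (val a) → ℝ)
    (gin gout : ∀ a, a ∈ SW → Fin (m a) → Fin (val a))
    (hspec : ∀ a (h : a ∈ SW) kk i o, q a kk i o ≠ 0 → i = gin a h kk ∧ o = gout a h kk)
    (k' : ∀ a, Fin (m a)) (ω : CAsg V val) :
    (∏ a ∈ Finset.univ.filter (· ∈ SW), q a (k' a) (ω (a, false)) (ω (a, true)))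
    = if (∀ p : V × Bool, p.1 ∈ SW → ω p = sigk hval SW gin gout k' p) then
        (∏ a ∈ Finset.univ.filter (· ∈ SW),
          q a (k' a) (sigk hval SW gin gout k' (a, false)) (sigk hval SW gin gout k' (a, true)))
      else 0 := by
  by_cases hm : ∀ p : V × Bool, p.1 ∈ SW → ω p = sigk hval SW gin gout k' p
  · rw [if_pos hm]
    refine Finset.prod_congr rfl fun a ha => ?_
    simp only [Finset.mem_filter] at ha
    rw [hm (a, false) ha.2, hm (a, true) ha.2]
  · rw [if_neg hm]
    push_neg at hm
    obtain ⟨p, hpS, hpne⟩ := hm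
    apply Finset.prod_eq_zero (i := p.1)
    · simp only [Finset.mem_filter, Finset.mem_univ, true_and]
      exact hpS
    · by_contra hne
      obtain ⟨h1, h2⟩ := hspec p.1 hpS (k' p.1) _ _ hne
      apply hpne
      obtain ⟨a, b⟩ := p
      cases b
      · rw [h1]; simp [sigk, hpS]
      · rw [h2]; simp [sigk, hpS]

lemma split_sum {I : Type} [Fintype I] {n : I → ℕ} (A B C : Set I)
    (hAB : Disjoint A B) (hAC : Disjoint A C) (hBC : Disjoint B C)
    (hcov : A ∪ B ∪ C = Set.univ)
    (F G : (∀ i, Fin (n i)) → ℝ)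
    (hF : ∀ ω ω' : ∀ i, Fin (n i), (∀ i ∈ A ∪ C, ω i = ω' i) → F ω = F ω')
    (hG : ∀ ω ω' : ∀ i, Fin (n i), (∀ i ∈ B ∪ C, ω i = ω' i) → G ω = G ω')
    (σ : ∀ i, Fin (n i)) :
    ∑ ω : ∀ i, Fin (n i), (if ∀ i ∈ C, ω i = σ i then F ω * G ω else 0)
    = (∑ ω : ∀ i, Fin (n i), if ∀ i ∈ B ∪ C, ω i = σ i then F ω else 0) *
      (∑ ω : ∀ i, Fin (n i), if ∀ i ∈ A ∪ C, ω i = σ i then G ω else 0) := by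
  classical
  have hcov' : ∀ i : I, i ∈ A ∨ i ∈ B ∨ i ∈ C := by
    intro i
    have : i ∈ A ∪ B ∪ C := hcov ▸ Set.mem_univ i
    simpa [Set.mem_union, or_assoc] using this
  rw [Finset.sum_mul_sum]
  simp_rw [ite_mul, zero_mul, mul_ite, mul_zero, ← ite_and, ← Finset.sum_product',
    ← Finset.sum_filter]
  refine Finset.sum_nbij'
    (fun ω => ((fun i => if i ∈ A then ω i else σ i), (fun i => if i ∈ B then ω i else σ i)))
    (fun p => fun i => if i ∈ A then p.1 i else p.2 i) ?_ ?_ ?_ ?_ ?_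
  · intro ω hω
    simp only [Finset.mem_filter, Finset.mem_univ, Finset.mem_product, true_and] at hω ⊢
    constructor
    · intro i hi
      rcases hi with hi | hi
      · have : i ∉ A := fun h => hAB.le_bot ⟨h, hi⟩
        simp [this]
      · have : i ∉ A := fun h => hAC.le_bot ⟨h, hi⟩
        simp [this]
    · intro i hi
      rcases hi with hi | hi
      · have h2 : i ∉ B := fun h => hAB.le_bot ⟨hi, h⟩
        simp [h2]
      · have h2 : i ∉ B := fun h => hBC.le_bot ⟨h, hi⟩
        simp [h2, hω i hi]
  · intro p hp
    simp only [Finset.mem_filter, Finset.mem_univ, true_and, Finset.mem_product] at hp ⊢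
    intro i hi
    have h1 : i ∉ A := fun h => hAC.le_bot ⟨h, hi⟩
    have h2 : i ∉ B := fun h => hBC.le_bot ⟨h, hi⟩
    simp [h1, hp.2 i (Or.inr hi)]
  · intro ω hω
    simp only [Finset.mem_filter, Finset.mem_univ, true_and] at hω
    funext i
    by_cases hA : i ∈ A
    · simp [hA]
    · rcases hcov' i with h | h | h
      · exact absurd h hA
      · simp [hA, h]
      · simp [hA, hω i h, (fun hh => hBC.le_bot ⟨hh, h⟩ : i ∉ B)]
  · intro p hp
    simp only [Finset.mem_filter, Finset.mem_univ, true_and, Finset.mem_product] at hp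
    have e1 : (fun i => if i ∈ A then (if i ∈ A then p.1 i else p.2 i) else σ i) = p.1 := by
      funext i
      by_cases hA : i ∈ A
      · simp [hA]
      · simp only [hA, if_false]
        rcases hcov' i with h | h | h
        · exact absurd h hA
        · exact (hp.1 i (Or.inl h)).symm
        · exact (hp.1 i (Or.inr h)).symm
    have e2 : (fun i => if i ∈ B then (if i ∈ A then p.1 i else p.2 i) else σ i) = p.2 := by
      funext i
      by_cases hB : i ∈ B
      · have hA : i ∉ A := fun h => hAB.le_bot ⟨h, hB⟩
        simp [hA, hB]
      · simp only [hB, if_false]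
        rcases hcov' i with h | h | h
        · exact (hp.2 i (Or.inl h)).symm
        · exact absurd h hB
        · exact (hp.2 i (Or.inr h)).symm
    exact Prod.ext e1 e2
  · intro ω hω
    simp only [Finset.mem_filter, Finset.mem_univ, true_and] at hω
    have hFe : F ω = F (fun i => if i ∈ A then ω i else σ i) := by
      apply hF
      intro i hi
      rcases hi with hi | hi
      · simp [hi]
      · have : i ∉ A := fun h => hAC.le_bot ⟨h, hi⟩
        simp [this, hω i hi]
    have hGe : G ω = G (fun i => if i ∈ B then ω i else σ i) := by
      apply hG
      intro i hi
      rcases hi with hi | hi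
      · have hA : i ∉ A := fun h => hAB.le_bot ⟨h, hi⟩
        simp [hi]
      · have h2 : i ∉ B := fun h => hBC.le_bot ⟨h, hi⟩
        simp [h2, hω i hi]
    rw [hFe, hGe]


lemma sum_eq_subsingleton {α : Type} (i1 i2 : Fintype α) (f g : α → ℝ)
    (h : ∀ a, f a = g a) :
    @Finset.sum α ℝ _ (@Finset.univ α i1) f = @Finset.sum α ℝ _ (@Finset.univ α i2) g := by
  cases Subsingleton.elim i1 i2
  exact Finset.sum_congr rfl fun a _ => h a

lemma split_sum_legs {val : V → ℕ} (SY SZ SW : Set V)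
    (hYZ : Disjoint SY SZ) (hYW : Disjoint SY SW) (hZW : Disjoint SZ SW)
    (hcover : SY ∪ SZ ∪ SW = Set.univ)
    (F G : CAsg V val → ℝ)
    (hF : ∀ ω ω' : CAsg V val, (∀ p : V × Bool, p.1 ∈ SY ∪ SW → ω p = ω' p) → F ω = F ω')
    (hG : ∀ ω ω' : CAsg V val, (∀ p : V × Bool, p.1 ∈ SZ ∪ SW → ω p = ω' p) → G ω = G ω')
    (σ : CAsg V val) :
    ∑ ω : CAsg V val, (if ∀ p : V × Bool, p.1 ∈ SW → ω p = σ p then F ω * G ω else 0)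
    = (∑ ω : CAsg V val, if ∀ p : V × Bool, p.1 ∈ SZ ∪ SW → ω p = σ p then F ω else 0) *
      (∑ ω : CAsg V val, if ∀ p : V × Bool, p.1 ∈ SY ∪ SW → ω p = σ p then G ω else 0) := by
  have hd1 : Disjoint {p : V × Bool | p.1 ∈ SY} {p : V × Bool | p.1 ∈ SZ} :=
    Set.disjoint_left.mpr fun p hp hq => Set.disjoint_left.mp hYZ hp hq
  have hd2 : Disjoint {p : V × Bool | p.1 ∈ SY} {p : V × Bool | p.1 ∈ SW} :=
    Set.disjoint_left.mpr fun p hp hq => Set.disjoint_left.mp hYW hp hq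
  have hd3 : Disjoint {p : V × Bool | p.1 ∈ SZ} {p : V × Bool | p.1 ∈ SW} :=
    Set.disjoint_left.mpr fun p hp hq => Set.disjoint_left.mp hZW hp hq
  have hcov : {p : V × Bool | p.1 ∈ SY} ∪ {p : V × Bool | p.1 ∈ SZ} ∪
      {p : V × Bool | p.1 ∈ SW} = Set.univ := by
    apply Set.eq_univ_of_forall
    intro p
    have h : p.1 ∈ SY ∪ SZ ∪ SW := hcover ▸ Set.mem_univ p.1
    exact h
  have e := split_sum (n := fun p : V × Bool => val p.1)
    {p : V × Bool | p.1 ∈ SY} {p : V × Bool | p.1 ∈ SZ} {p : V × Bool | p.1 ∈ SW}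
    hd1 hd2 hd3 hcov F G hF hG σ
  refine Eq.trans (sum_eq_subsingleton _ _ _ _ fun ω => rfl) (Eq.trans e ?_)
  congr 1
  · exact sum_eq_subsingleton _ _ _ _ fun ω => rfl
  · exact sum_eq_subsingleton _ _ _ _ fun ω => rfl

lemma dir12 {val : V → ℕ} (hval : ∀ a, 0 < val a)
    (SY SZ SW : Set V)
    (hYZ : Disjoint SY SZ) (hYW : Disjoint SY SW) (hZW : Disjoint SZ SW)
    (hcover : SY ∪ SZ ∪ SW = Set.univ)
    (κ : CAsg V val → ℝ)
    (α β : CAsg V val → ℝ)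
    (hα : DependsOnlyOn {p : V × Bool | p.1 ∈ SY ∪ SW} α)
    (hβ : DependsOnlyOn {p : V × Bool | p.1 ∈ SZ ∪ SW} β)
    (hκαβ : ∀ ω, κ ω = α ω * β ω)
    (m : V → ℕ) (q : ∀ a, Fin (m a) → Fin (val a) → Fin (val a) → ℝ)
    (gin gout : ∀ a, a ∈ SW → Fin (m a) → Fin (val a))
    (hspec : ∀ a (h : a ∈ SW) kk i o, q a kk i o ≠ 0 → i = gin a h kk ∧ o = gout a h kk)
    (k : ∀ a, Fin (m a)) :
    cOutcomeProb val κ m q k *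
      (∑ k' : ∀ a, Fin (m a),
        if ∀ a ∈ SW, k' a = k a then cOutcomeProb val κ m q k' else 0) =
    (∑ k' : ∀ a, Fin (m a),
        if ∀ a ∈ SY ∪ SW, k' a = k a then cOutcomeProb val κ m q k' else 0) *
    (∑ k' : ∀ a, Fin (m a),
        if ∀ a ∈ SZ ∪ SW, k' a = k a then cOutcomeProb val κ m q k' else 0) := by
  classical
  -- general (k'-dependent) building blocks
  set σg : (∀ a, Fin (m a)) → CAsg V val := fun k' => sigk hval SW gin gout k' with hσg
  set QY : (∀ a, Fin (m a)) → CAsg V val → ℝ := fun k' ω =>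
    ∏ a ∈ Finset.univ.filter (· ∈ SY), q a (k' a) (ω (a, false)) (ω (a, true)) with hQY
  set QZ : (∀ a, Fin (m a)) → CAsg V val → ℝ := fun k' ω =>
    ∏ a ∈ Finset.univ.filter (· ∈ SZ), q a (k' a) (ω (a, false)) (ω (a, true)) with hQZ
  set cW : (∀ a, Fin (m a)) → ℝ := fun k' =>
    ∏ a ∈ Finset.univ.filter (· ∈ SW), q a (k' a) (σg k' (a, false)) (σg k' (a, true)) with hcW
  set Φg : (∀ a, Fin (m a)) → ℝ := fun k' =>
    ∑ ω : CAsg V val, if ∀ p : V × Bool, p.1 ∈ SZ ∪ SW → ω p = σg k' p then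
      α ω * QY k' ω else 0 with hΦg
  set Ψg : (∀ a, Fin (m a)) → ℝ := fun k' =>
    ∑ ω : CAsg V val, if ∀ p : V × Bool, p.1 ∈ SY ∪ SW → ω p = σg k' p then
      β ω * QZ k' ω else 0 with hΨg
  -- k-fixed building blocks
  set ΦD : (∀ a, Fin (m a)) → ℝ := fun k' =>
    ∑ ω : CAsg V val, if ∀ p : V × Bool, p.1 ∈ SZ ∪ SW → ω p = σg k p then
      α ω * QY k' ω else 0 with hΦD
  set ΨD : (∀ a, Fin (m a)) → ℝ := fun k' =>
    ∑ ω : CAsg V val, if ∀ p : V × Bool, p.1 ∈ SY ∪ SW → ω p = σg k p then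
      β ω * QZ k' ω else 0 with hΨD
  -- factorization of the outcome probability
  have Pfact : ∀ k', cOutcomeProb val κ m q k' = cW k' * (Φg k' * Ψg k') := by
    intro k'
    have point : ∀ ω : CAsg V val,
        κ ω * ∏ a, q a (k' a) (ω (a, false)) (ω (a, true))
        = cW k' * (if ∀ p : V × Bool, p.1 ∈ SW → ω p = σg k' p then
            (α ω * QY k' ω) * (β ω * QZ k' ω) else 0) := by
      intro ω
      rw [hκαβ, prod_split3 SY SZ SW hYZ hYW hZW hcover,
        prodW_eq hval SW q gin gout hspec k' ω]
      by_cases hc : ∀ p : V × Bool, p.1 ∈ SW → ω p = σg k' p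
      · rw [if_pos hc, if_pos hc]
        simp only [hQY, hQZ, hcW, hσg]
        ring
      · rw [if_neg hc, if_neg hc]
        ring
    calc cOutcomeProb val κ m q k'
        = ∑ ω : CAsg V val, cW k' * (if ∀ p : V × Bool, p.1 ∈ SW → ω p = σg k' p then
            (α ω * QY k' ω) * (β ω * QZ k' ω) else 0) :=
          Finset.sum_congr rfl fun ω _ => point ω
      _ = cW k' * ∑ ω : CAsg V val, (if ∀ p : V × Bool, p.1 ∈ SW → ω p = σg k' p then
            (α ω * QY k' ω) * (β ω * QZ k' ω) else 0) := by rw [← Finset.mul_sum]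
      _ = cW k' * (Φg k' * Ψg k') := by
          rw [split_sum_legs SY SZ SW hYZ hYW hZW hcover
            (fun ω => α ω * QY k' ω) (fun ω => β ω * QZ k' ω) ?_ ?_ (σg k')]
          · intro ω ω' hag
            have h1 : α ω = α ω' := hα ω ω' fun p hp => hag p hp
            have h2 : QY k' ω = QY k' ω' := by
              refine Finset.prod_congr rfl fun a ha => ?_
              simp only [Finset.mem_filter, Finset.mem_univ, true_and] at ha
              rw [hag (a, false) (Or.inl ha), hag (a, true) (Or.inl ha)]
            show α ω * QY k' ω = α ω' * QY k' ω'
            rw [h1, h2]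
          · intro ω ω' hag
            have h1 : β ω = β ω' := hβ ω ω' fun p hp => hag p hp
            have h2 : QZ k' ω = QZ k' ω' := by
              refine Finset.prod_congr rfl fun a ha => ?_
              simp only [Finset.mem_filter, Finset.mem_univ, true_and] at ha
              rw [hag (a, false) (Or.inl ha), hag (a, true) (Or.inl ha)]
            show β ω * QZ k' ω = β ω' * QZ k' ω'
            rw [h1, h2]
  -- dependence of the k-fixed blocks
  have hΦdep : ∀ k1 k2, (∀ a ∈ SY ∪ SW, k1 a = k2 a) → ΦD k1 = ΦD k2 := by
    intro k1 k2 hag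
    refine Finset.sum_congr rfl fun ω _ => ?_
    have h2 : QY k1 ω = QY k2 ω := by
      refine Finset.prod_congr rfl fun a ha => ?_
      simp only [Finset.mem_filter, Finset.mem_univ, true_and] at ha
      rw [hag a (Or.inl ha)]
    rw [h2]
  have hΨdep : ∀ k1 k2, (∀ a ∈ SZ ∪ SW, k1 a = k2 a) → ΨD k1 = ΨD k2 := by
    intro k1 k2 hag
    refine Finset.sum_congr rfl fun ω _ => ?_
    have h2 : QZ k1 ω = QZ k2 ω := by
      refine Finset.prod_congr rfl fun a ha => ?_
      simp only [Finset.mem_filter, Finset.mem_univ, true_and] at ha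
      rw [hag a (Or.inl ha)]
    rw [h2]
  -- rewriting the blocks for outcomes agreeing with k on SW
  have hblocks : ∀ k', (∀ a ∈ SW, k' a = k a) →
      cW k' = cW k ∧ Φg k' = ΦD k' ∧ Ψg k' = ΨD k' := by
    intro k' hc
    have hσ : σg k' = σg k := sigk_congr hval SW gin gout k k' hc
    refine ⟨?_, ?_, ?_⟩
    · simp only [hcW, hσ]
      refine Finset.prod_congr rfl fun a ha => ?_
      simp only [Finset.mem_filter, Finset.mem_univ, true_and] at ha
      rw [hc a ha]
    · simp only [hΦg, hΦD, hσ]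
    · simp only [hΨg, hΨD, hσ]
  -- the three marginals and the point probability
  have hPk : cOutcomeProb val κ m q k = cW k * (ΦD k * ΨD k) := by
    rw [Pfact k]
  have hg : (∑ k' : ∀ a, Fin (m a),
      if ∀ a ∈ SW, k' a = k a then cOutcomeProb val κ m q k' else 0)
      = cW k *
        ((∑ k' : ∀ a, Fin (m a), if ∀ a ∈ SZ ∪ SW, k' a = k a then ΦD k' else 0) *
         (∑ k' : ∀ a, Fin (m a), if ∀ a ∈ SY ∪ SW, k' a = k a then ΨD k' else 0)) := by
    rw [← split_sum (n := m) SY SZ SW hYZ hYW hZW hcover ΦD ΨD hΦdep hΨdep k,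
      Finset.mul_sum]
    refine Finset.sum_congr rfl fun k' _ => ?_
    by_cases hc : ∀ a ∈ SW, k' a = k a
    · rw [if_pos hc, if_pos hc, Pfact k']
      rcases hblocks k' hc with ⟨h1, h2, h3⟩
      rw [h1, h2, h3]
    · rw [if_neg hc, if_neg hc, mul_zero]
  have hmY : (∑ k' : ∀ a, Fin (m a),
      if ∀ a ∈ SY ∪ SW, k' a = k a then cOutcomeProb val κ m q k' else 0)
      = cW k * ΦD k *
        (∑ k' : ∀ a, Fin (m a), if ∀ a ∈ SY ∪ SW, k' a = k a then ΨD k' else 0) := by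
    rw [Finset.mul_sum]
    refine Finset.sum_congr rfl fun k' _ => ?_
    by_cases hc : ∀ a ∈ SY ∪ SW, k' a = k a
    · rw [if_pos hc, if_pos hc, Pfact k']
      have hcW' : ∀ a ∈ SW, k' a = k a := fun a ha => hc a (Or.inr ha)
      rcases hblocks k' hcW' with ⟨h1, h2, h3⟩
      rw [h1, h2, h3, hΦdep k' k hc]
      ring
    · rw [if_neg hc, if_neg hc, mul_zero]
  have hmZ : (∑ k' : ∀ a, Fin (m a),
      if ∀ a ∈ SZ ∪ SW, k' a = k a then cOutcomeProb val κ m q k' else 0)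
      = cW k * ΨD k *
        (∑ k' : ∀ a, Fin (m a), if ∀ a ∈ SZ ∪ SW, k' a = k a then ΦD k' else 0) := by
    rw [Finset.mul_sum]
    refine Finset.sum_congr rfl fun k' _ => ?_
    by_cases hc : ∀ a ∈ SZ ∪ SW, k' a = k a
    · rw [if_pos hc, if_pos hc, Pfact k']
      have hcW' : ∀ a ∈ SW, k' a = k a := fun a ha => hc a (Or.inr ha)
      rcases hblocks k' hcW' with ⟨h1, h2, h3⟩
      rw [h1, h2, h3, hΨdep k' k hc]
      ring
    · rw [if_neg hc, if_neg hc, mul_zero]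
  rw [hPk, hg, hmY, hmZ]
  ring

lemma sum_ite_congr' {α : Type} (i1 i2 : Fintype α) (c1 c2 : α → Prop)
    (d1 : ∀ a, Decidable (c1 a)) (d2 : ∀ a, Decidable (c2 a)) (f g : α → ℝ)
    (hc : ∀ a, c1 a ↔ c2 a) (hf : ∀ a, f a = g a) :
    @Finset.sum α ℝ _ (@Finset.univ α i1) (fun a => @ite ℝ (c1 a) (d1 a) (f a) 0)
    = @Finset.sum α ℝ _ (@Finset.univ α i2) (fun a => @ite ℝ (c2 a) (d2 a) (g a) 0) := by
  cases Subsingleton.elim i1 i2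
  exact Finset.sum_congr rfl fun a _ => if_congr (hc a) (hf a) rfl


set_option maxHeartbeats 1000000 in
/-- **Classical strong relative independence is equivalent to conditional independence
of the outcomes of all interventions** (with maximally informative interventions at
the conditioning nodes `W`). -/
theorem classical_strong_relative_independence_iff
    {V : Type} [Fintype V] (val : V → ℕ) (hval : ∀ a, 0 < val a)
    (SY SZ SW : Set V)
    (hYZ : Disjoint SY SZ) (hYW : Disjoint SY SW) (hZW : Disjoint SZ SW)
    (hcover : SY ∪ SZ ∪ SW = Set.univ)
    (κ : CAsg V val → ℝ) (hκ : IsCProcess val κ) :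
    -- (1) κ = α · β
    (∃ α β : CAsg V val → ℝ,
      DependsOnlyOn {p : V × Bool | p.1 ∈ SY ∪ SW} α ∧
      DependsOnlyOn {p : V × Bool | p.1 ∈ SZ ∪ SW} β ∧
      ∀ ω, κ ω = α ω * β ω)
    ↔
    -- (2) outcome conditional independence for all interventions,
    --     maximally informative at `W`
    (∀ (m : V → ℕ) (q : ∀ a, Fin (m a) → Fin (val a) → Fin (val a) → ℝ),
      (∀ a, IsCInstrument (q a)) →
      (∀ a ∈ SW, IsMaxInf (q a)) →
      ∀ k : ∀ a, Fin (m a),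
        cOutcomeProb val κ m q k *
          (∑ k' : ∀ a, Fin (m a),
            if ∀ a ∈ SW, k' a = k a then cOutcomeProb val κ m q k' else 0) =
        (∑ k' : ∀ a, Fin (m a),
            if ∀ a ∈ SY ∪ SW, k' a = k a then cOutcomeProb val κ m q k' else 0) *
        (∑ k' : ∀ a, Fin (m a),
            if ∀ a ∈ SZ ∪ SW, k' a = k a then cOutcomeProb val κ m q k' else 0)) := by
  constructor
  · rintro ⟨α, β, hα, hβ, hκαβ⟩ m q hq hmax k
    simp only [IsMaxInf] at hmax
    choose gin hsurj gout hspec using hmax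
    exact dir12 hval SY SZ SW hYZ hYW hZW hcover κ α β hα hβ hκαβ m q gin gout hspec k
  · intro h2
    have hCpos : (0:ℝ) < ∏ a : V, ((val a : ℝ))⁻¹ :=
      Finset.prod_pos fun a _ => inv_pos.mpr (Nat.cast_pos.mpr (hval a))
    have key : ∀ ω : CAsg V val,
        κ ω * (∑ ω' : CAsg V val,
            if (∀ p : V × Bool, p.1 ∈ SW → ω' p = ω p) then κ ω' else 0)
        = (∑ ω' : CAsg V val,
            if (∀ p : V × Bool, p.1 ∈ SY ∪ SW → ω' p = ω p) then κ ω' else 0) *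
          (∑ ω' : CAsg V val,
            if (∀ p : V × Bool, p.1 ∈ SZ ∪ SW → ω' p = ω p) then κ ω' else 0) := by
      intro ω
      have h := h2 (fun a => val a * val a) (fun a => obsQ)
        (fun a => obsQ_instrument (hval a)) (fun a _ => obsQ_maxinf) ((obsE val).symm ω)
      have eP : cOutcomeProb val κ (fun a => val a * val a) (fun a => obsQ)
          ((obsE val).symm ω) = (∏ a : V, ((val a : ℝ))⁻¹) * κ ω :=
        (obs_prob κ _).trans (by rw [Equiv.apply_symm_apply])
      have eW : (∑ k' : ∀ a, Fin (val a * val a),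
          if ∀ a ∈ SW, k' a = (obsE val).symm ω a then
            cOutcomeProb val κ (fun a => val a * val a) (fun a => obsQ) k' else 0)
          = (∏ a : V, ((val a : ℝ))⁻¹) * ∑ ω' : CAsg V val,
            if (∀ p : V × Bool, p.1 ∈ SW → ω' p = ω p) then κ ω' else 0 := by
        refine (sum_ite_congr' _ _ _ _ _ _ _ _ (fun _ => Iff.rfl) (fun _ => rfl)).trans
          ((obs_marg κ SW ((obsE val).symm ω)).trans ?_)
        congr 1
        refine sum_ite_congr' _ _ _ _ _ _ _ _ (fun x => ?_) (fun _ => rfl)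
        rw [Equiv.apply_symm_apply]
      have eY : (∑ k' : ∀ a, Fin (val a * val a),
          if ∀ a ∈ SY ∪ SW, k' a = (obsE val).symm ω a then
            cOutcomeProb val κ (fun a => val a * val a) (fun a => obsQ) k' else 0)
          = (∏ a : V, ((val a : ℝ))⁻¹) * ∑ ω' : CAsg V val,
            if (∀ p : V × Bool, p.1 ∈ SY ∪ SW → ω' p = ω p) then κ ω' else 0 := by
        refine (sum_ite_congr' _ _ _ _ _ _ _ _ (fun _ => Iff.rfl) (fun _ => rfl)).trans
          ((obs_marg κ (SY ∪ SW) ((obsE val).symm ω)).trans ?_)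
        congr 1
        refine sum_ite_congr' _ _ _ _ _ _ _ _ (fun x => ?_) (fun _ => rfl)
        rw [Equiv.apply_symm_apply]
      have eZ : (∑ k' : ∀ a, Fin (val a * val a),
          if ∀ a ∈ SZ ∪ SW, k' a = (obsE val).symm ω a then
            cOutcomeProb val κ (fun a => val a * val a) (fun a => obsQ) k' else 0)
          = (∏ a : V, ((val a : ℝ))⁻¹) * ∑ ω' : CAsg V val,
            if (∀ p : V × Bool, p.1 ∈ SZ ∪ SW → ω' p = ω p) then κ ω' else 0 := by
        refine (sum_ite_congr' _ _ _ _ _ _ _ _ (fun _ => Iff.rfl) (fun _ => rfl)).trans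
          ((obs_marg κ (SZ ∪ SW) ((obsE val).symm ω)).trans ?_)
        congr 1
        refine sum_ite_congr' _ _ _ _ _ _ _ _ (fun x => ?_) (fun _ => rfl)
        rw [Equiv.apply_symm_apply]
      rw [eP, eW, eY, eZ] at h
      set C := ∏ a : V, ((val a : ℝ))⁻¹ with hC
      set G := (∑ ω' : CAsg V val,
          if (∀ p : V × Bool, p.1 ∈ SW → ω' p = ω p) then κ ω' else 0) with hG
      set F := (∑ ω' : CAsg V val,
          if (∀ p : V × Bool, p.1 ∈ SY ∪ SW → ω' p = ω p) then κ ω' else 0) with hF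
      set H := (∑ ω' : CAsg V val,
          if (∀ p : V × Bool, p.1 ∈ SZ ∪ SW → ω' p = ω p) then κ ω' else 0) with hH
      refine mul_left_cancel₀ (a := C * C) (mul_pos hCpos hCpos).ne' ?_
      calc C * C * (κ ω * G) = (C * κ ω) * (C * G) := by ring
        _ = (C * F) * (C * H) := h
        _ = C * C * (F * H) := by ring
    refine ⟨fun ω =>
        if (∑ ω' : CAsg V val,
            if (∀ p : V × Bool, p.1 ∈ SW → ω' p = ω p) then κ ω' else 0) = 0 then 0
        else (∑ ω' : CAsg V val,
            if (∀ p : V × Bool, p.1 ∈ SY ∪ SW → ω' p = ω p) then κ ω' else 0) /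
          (∑ ω' : CAsg V val,
            if (∀ p : V × Bool, p.1 ∈ SW → ω' p = ω p) then κ ω' else 0),
      fun ω =>
        if (∑ ω' : CAsg V val,
            if (∀ p : V × Bool, p.1 ∈ SW → ω' p = ω p) then κ ω' else 0) = 0 then 0
        else (∑ ω' : CAsg V val,
            if (∀ p : V × Bool, p.1 ∈ SZ ∪ SW → ω' p = ω p) then κ ω' else 0),
      ?_, ?_, ?_⟩
    · intro ω ω' hag
      dsimp only
      have hGdep : (∑ x : CAsg V val,
          if (∀ p : V × Bool, p.1 ∈ SW → x p = ω p) then κ x else 0)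
          = (∑ x : CAsg V val,
          if (∀ p : V × Bool, p.1 ∈ SW → x p = ω' p) then κ x else 0) :=
        Finset.sum_congr rfl fun x _ => if_congr
          ⟨fun h p hp => (h p hp).trans (hag p (Or.inr hp)),
           fun h p hp => (h p hp).trans (hag p (Or.inr hp)).symm⟩ rfl rfl
      have hFdep : (∑ x : CAsg V val,
          if (∀ p : V × Bool, p.1 ∈ SY ∪ SW → x p = ω p) then κ x else 0)
          = (∑ x : CAsg V val,
          if (∀ p : V × Bool, p.1 ∈ SY ∪ SW → x p = ω' p) then κ x else 0) :=
        Finset.sum_congr rfl fun x _ => if_congr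
          ⟨fun h p hp => (h p hp).trans (hag p hp),
           fun h p hp => (h p hp).trans (hag p hp).symm⟩ rfl rfl
      rw [hGdep, hFdep]
    · intro ω ω' hag
      dsimp only
      have hGdep : (∑ x : CAsg V val,
          if (∀ p : V × Bool, p.1 ∈ SW → x p = ω p) then κ x else 0)
          = (∑ x : CAsg V val,
          if (∀ p : V × Bool, p.1 ∈ SW → x p = ω' p) then κ x else 0) :=
        Finset.sum_congr rfl fun x _ => if_congr
          ⟨fun h p hp => (h p hp).trans (hag p (Or.inr hp)),
           fun h p hp => (h p hp).trans (hag p (Or.inr hp)).symm⟩ rfl rfl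
      have hHdep : (∑ x : CAsg V val,
          if (∀ p : V × Bool, p.1 ∈ SZ ∪ SW → x p = ω p) then κ x else 0)
          = (∑ x : CAsg V val,
          if (∀ p : V × Bool, p.1 ∈ SZ ∪ SW → x p = ω' p) then κ x else 0) :=
        Finset.sum_congr rfl fun x _ => if_congr
          ⟨fun h p hp => (h p hp).trans (hag p hp),
           fun h p hp => (h p hp).trans (hag p hp).symm⟩ rfl rfl
      rw [hGdep, hHdep]
    · intro ω
      dsimp only
      by_cases hg : (∑ ω' : CAsg V val,
          if (∀ p : V × Bool, p.1 ∈ SW → ω' p = ω p) then κ ω' else 0) = 0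
      · rw [if_pos hg, if_pos hg, mul_zero]
        have hterms := (Finset.sum_eq_zero_iff_of_nonneg ?_).mp hg
        · have hone := hterms ω (Finset.mem_univ ω)
          rw [if_pos (fun p _ => rfl)] at hone
          exact hone
        · intro x _
          split_ifs
          exacts [(hκ.1 x).1, le_refl 0]
      · rw [if_neg hg, if_neg hg, div_mul_eq_mul_div, eq_div_iff hg]
        exact key ω


end QCM
end
end
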